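/- arXiv:1712.01605 — 5 statements merged into one kernel-verified Lean document; each statement's English description precedes it below -/
import Mathlib

section
/- Let A_1 and A_2 be combinatorially simplicial arrangements in K^{ℓ_1} and K^{ℓ_2} respectively, K any field. Then their product A_1 × A_2 is combinatorially simplicial. -/
/-!
The intersection lattice of `A × B` is `L(A) × L(B)`, via `(X, Y) ↦ X × Y`. The Möbius
function is characterised by `μ(V) = 1` and `∑_{Y ≥ X} μ(Y) = 0` for `X ≠ V`, and
`(X, Y) ↦ μ(X) μ(Y)` satisfies this, so `χ_{A×B} = χ_A χ_B`. The restriction of `A × B` to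
`H × V₂` is linearly isomorphic to `A^H × B` (and symmetrically), so summing over the
hyperplanes gives `s(A × B) = s(A) |χ_B(-1)| + |χ_A(-1)| s(B)`.
-/

open scoped Classical

noncomputable section

section Alg

variable {K : Type*} [Field K] {V : Type*} [AddCommGroup V] [Module K V]

/-- `H` is a linear hyperplane of `V`, i.e. the kernel of a nonzero linear functional. -/
def IsLinHyperplane (H : Submodule K V) : Prop :=
  ∃ f : V →ₗ[K] K, f ≠ 0 ∧ H = LinearMap.ker f

/-- The intersection lattice `L(A)` of an arrangement `A`:
all intersections of subsets of `A` (the empty intersection being `⊤ = V`). -/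
def interLat (A : Finset (Submodule K V)) : Finset (Submodule K V) :=
  A.powerset.image fun S => S.inf id

/-- The localization `A_X = {H ∈ A | X ⊆ H}`. -/
def locArr (A : Finset (Submodule K V)) (X : Submodule K V) : Finset (Submodule K V) :=
  A.filter fun H => X ≤ H

/-- The restriction `A^X = {X ∩ H | H ∈ A, X ⊄ H}`, as an arrangement in `X`. -/
def resArr (A : Finset (Submodule K V)) (X : Submodule K V) : Finset (Submodule K ↥X) :=
  (A.filter fun H => ¬ X ≤ H).image fun H => H.comap X.subtype

/-- The quotient arrangement `A_X / X = {H/X | H ∈ A, X ⊆ H}` in `V ⧸ X`. -/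
def quotArr (A : Finset (Submodule K V)) (X : Submodule K V) : Finset (Submodule K (V ⧸ X)) :=
  (A.filter fun H => X ≤ H).image fun H => H.map X.mkQ

/-- `X` is a modular element of the intersection lattice of `A`. -/
def IsModularFlat (A : Finset (Submodule K V)) (X : Submodule K V) : Prop :=
  X ∈ interLat A ∧ ∀ Y ∈ interLat A, X ⊔ Y ∈ interLat A

/-- `A` is supersolvable: its intersection lattice contains a maximal chain
`V = X_0 > X_1 > … > X_ℓ` of modular elements (`X_i` of codimension `i`). -/
def IsSupersolvableArr (A : Finset (Submodule K V)) : Prop :=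
  ∃ c : ℕ → Submodule K V,
    (∀ i ≤ Module.finrank K V, IsModularFlat A (c i)) ∧
    (∀ i ≤ Module.finrank K V, Module.finrank K (V ⧸ c i) = i) ∧
    ∀ i < Module.finrank K V, c (i + 1) < c i

/-- `A` is reducible: it decomposes as a product along a nontrivial
direct sum decomposition `V = V₁ ⊕ V₂` (each hyperplane contains `V₁` or `V₂`). -/
def IsReducibleArr (A : Finset (Submodule K V)) : Prop :=
  ∃ V₁ V₂ : Submodule K V, V₁ ≠ ⊥ ∧ V₂ ≠ ⊥ ∧ IsCompl V₁ V₂ ∧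
    ∀ H ∈ A, V₁ ≤ H ∨ V₂ ≤ H

/-- `A` and `B` are linearly isomorphic arrangements in `V`. -/
def LinIsoArr (A B : Finset (Submodule K V)) : Prop :=
  ∃ φ : V ≃ₗ[K] V, B = A.image fun H => H.map (φ : V →ₗ[K] V)

/-- `A` and `B` are lattice equivalent: their intersection lattices are isomorphic
as posets (equivalently, as lattices). -/
def LatEquivArr {V₂ : Type*} [AddCommGroup V₂] [Module K V₂]
    (A : Finset (Submodule K V)) (B : Finset (Submodule K V₂)) : Prop :=
  ∃ e : {X // X ∈ interLat A} ≃ {Y // Y ∈ interLat B},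
    ∀ X Y : {X // X ∈ interLat A},
      (X : Submodule K V) ≤ (Y : Submodule K V) ↔
        (e X : Submodule K V₂) ≤ (e Y : Submodule K V₂)

/-- The product of the arrangements `A` in `V` and `B` in `V₂`, in `V × V₂`. -/
def prodArr {V₂ : Type*} [AddCommGroup V₂] [Module K V₂]
    (A : Finset (Submodule K V)) (B : Finset (Submodule K V₂)) :
    Finset (Submodule K (V × V₂)) :=
  A.image (fun H => H.prod (⊤ : Submodule K V₂)) ∪
    B.image fun H => (⊤ : Submodule K V).prod H

end Alg

section Moebius

variable {K : Type*} [Field K] {V : Type*} [AddCommGroup V] [Module K V]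
  [FiniteDimensional K V]

/-- The Möbius function of the intersection lattice of `A`:
`μ(V) = 1` and `μ(X) = - ∑_{Y ⊋ X, Y ∈ L(A)} μ(Y)` for `X ≠ V`. -/
def arrMoebius [FiniteDimensional K V] (A : Finset (Submodule K V)) (X : Submodule K V) : ℤ :=
  if X = ⊤ then 1
  else - ∑ Y ∈ ((interLat A).filter fun Y => X < Y).attach, arrMoebius A Y.1
termination_by Module.finrank K V - Module.finrank K ↥X
decreasing_by
  have hY := (Finset.mem_filter.mp Y.2).2
  have h1 : Module.finrank K ↥X < Module.finrank K ↥(Y.1) :=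
    Submodule.finrank_lt_finrank_of_lt hY
  have h2 : Module.finrank K ↥(Y.1) ≤ Module.finrank K V := Submodule.finrank_le _
  omega

/-- The characteristic polynomial `χ_A(t) = ∑_{X ∈ L(A)} μ(X) t^{dim X}`,
evaluated at the integer `t`. -/
def charPolyAt (A : Finset (Submodule K V)) (t : ℤ) : ℤ :=
  ∑ X ∈ interLat A, arrMoebius A X * t ^ Module.finrank K ↥X

/-- The invariant `s(A) = ℓ⋅|χ_A(-1)| - 2 ∑_{H ∈ A} |χ_{A^H}(-1)|`. -/
def sInvariant (A : Finset (Submodule K V)) : ℤ :=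
  (Module.finrank K V : ℤ) * |charPolyAt A (-1)| -
    2 * ∑ H ∈ A, |charPolyAt (resArr A H) (-1)|

end Moebius

section Top

variable {V : Type*} [AddCommGroup V] [Module ℝ V]

/-- `C` is an open simplicial cone: the set of strictly positive linear
combinations of some basis of `V`. -/
def IsOpenSimplicialCone (C : Set V) : Prop :=
  ∃ b : Module.Basis (Fin (Module.finrank ℝ V)) ℝ V,
    C = {v | ∃ c : Fin (Module.finrank ℝ V) → ℝ, (∀ i, 0 < c i) ∧ v = ∑ i, c i • b i}

variable [TopologicalSpace V]

/-- `C` is a chamber of `A`: a connected component of the complement of the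
union of the hyperplanes of `A`. -/
def IsChamberOf (A : Finset (Submodule ℝ V)) (C : Set V) : Prop :=
  ∃ x ∈ (⋃ H ∈ A, (H : Set V))ᶜ, C = connectedComponentIn ((⋃ H ∈ A, (H : Set V))ᶜ) x

/-- `A` is a simplicial arrangement: every chamber is an open simplicial cone. -/
def IsSimplicialArr (A : Finset (Submodule ℝ V)) : Prop :=
  ∀ C : Set V, IsChamberOf A C → IsOpenSimplicialCone C

/-- `H` is a wall of the chamber `C`: a hyperplane of `A` meeting the closure
of `C` in a set of dimension `dim V - 1`. -/
def IsWallOf (A : Finset (Submodule ℝ V)) (C : Set V) (H : Submodule ℝ V) : Prop :=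
  H ∈ A ∧
    Module.finrank ℝ ↥(Submodule.span ℝ ((H : Set V) ∩ closure C)) + 1 = Module.finrank ℝ V

/-- `α` is a basis for the chamber `C`: a family of linear forms, one vanishing on
each wall of `C`, with `C = ⋂ᵢ {αᵢ > 0}`. -/
def IsChamberBasis {ℓ : ℕ} (A : Finset (Submodule ℝ V)) (C : Set V)
    (α : Fin ℓ → (V →ₗ[ℝ] ℝ)) : Prop :=
  (∀ i, IsWallOf A C (LinearMap.ker (α i))) ∧
  (∀ H, IsWallOf A C H → ∃ i, H = LinearMap.ker (α i)) ∧
  (Function.Injective fun i => LinearMap.ker (α i)) ∧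
  C = ⋂ i, {v | 0 < α i v}

/-- `C'` is the chamber adjacent to `C` across the wall `H`:
the common wall is `H = ⟨closure C ∩ closure C'⟩`. -/
def IsAdjChamber (A : Finset (Submodule ℝ V)) (C C' : Set V) (H : Submodule ℝ V) : Prop :=
  IsChamberOf A C' ∧ C' ≠ C ∧ Submodule.span ℝ (closure C ∩ closure C') = H

/-- The Coxeter graph of a chamber with basis `α`: vertices `1, …, ℓ`, with an edge
`{i, j}` whenever `|A_{αᵢ^⊥ ∩ αⱼ^⊥}| ≥ 3`. -/
def coxGraph {ℓ : ℕ} (A : Finset (Submodule ℝ V)) (α : Fin ℓ → (V →ₗ[ℝ] ℝ)) :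
    SimpleGraph (Fin ℓ) :=
  SimpleGraph.fromRel fun i j =>
    3 ≤ (locArr A (LinearMap.ker (α i) ⊓ LinearMap.ker (α j))).card

end Top

section Concrete

/-- The `i`-th coordinate functional on `ℝ^ℓ`. -/
def coordFn (ℓ : ℕ) (i : Fin ℓ) : (Fin ℓ → ℝ) →ₗ[ℝ] ℝ := LinearMap.proj i

/-- The essential braid arrangement `A(A_ℓ)` in `ℝ^ℓ`:
`{ker(xᵢ - xⱼ) | i < j} ∪ {ker xᵢ}` (the braid arrangement of `ℝ^{ℓ+1}` made essential). -/
def braidArr (ℓ : ℕ) : Finset (Submodule ℝ (Fin ℓ → ℝ)) :=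
  ((Finset.univ : Finset (Fin ℓ × Fin ℓ)).filter fun p => p.1 < p.2).image
      (fun p => LinearMap.ker (coordFn ℓ p.1 - coordFn ℓ p.2)) ∪
    (Finset.univ : Finset (Fin ℓ)).image fun i => LinearMap.ker (coordFn ℓ i)

/-- The reflection arrangement `A(C_ℓ)` in `ℝ^ℓ`:
`{ker(xᵢ - xⱼ), ker(xᵢ + xⱼ) | i < j} ∪ {ker xᵢ}`. -/
def typeCArr (ℓ : ℕ) : Finset (Submodule ℝ (Fin ℓ → ℝ)) :=
  ((Finset.univ : Finset (Fin ℓ × Fin ℓ)).filter fun p => p.1 < p.2).image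
      (fun p => LinearMap.ker (coordFn ℓ p.1 - coordFn ℓ p.2)) ∪
  ((Finset.univ : Finset (Fin ℓ × Fin ℓ)).filter fun p => p.1 < p.2).image
      (fun p => LinearMap.ker (coordFn ℓ p.1 + coordFn ℓ p.2)) ∪
    (Finset.univ : Finset (Fin ℓ)).image fun i => LinearMap.ker (coordFn ℓ i)

/-- The linear functional on `ℝ³` with coefficient vector `(a, b, c)`. -/
def fn3 (a b c : ℝ) : (Fin 3 → ℝ) →ₗ[ℝ] ℝ :=
  a • coordFn 3 0 + b • coordFn 3 1 + c • coordFn 3 2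

/-- The arrangement `A(2n, 1)` in `ℝ³`, with normal vectors
`(-sin(πk/n), cos(πk/n), 0)` for `k = 0, …, n-1` and
`(cos(π(2j+1)/n), sin(π(2j+1)/n), 1)` for `j = 0, …, n-1`. -/
def A2n1Arr (n : ℕ) : Finset (Submodule ℝ (Fin 3 → ℝ)) :=
  (Finset.range n).image (fun k =>
      LinearMap.ker (fn3 (-Real.sin (Real.pi * (k : ℝ) / (n : ℝ)))
        (Real.cos (Real.pi * (k : ℝ) / (n : ℝ))) 0)) ∪
    (Finset.range n).image fun j =>
      LinearMap.ker (fn3 (Real.cos (Real.pi * (2 * (j : ℝ) + 1) / (n : ℝ)))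
        (Real.sin (Real.pi * (2 * (j : ℝ) + 1) / (n : ℝ))) 1)

/-- The arrangement `A(4m+1, 1) = A(4m, 1) ∪ {(0,0,1)^⊥}` in `ℝ³`. -/
def A4m1Arr (m : ℕ) : Finset (Submodule ℝ (Fin 3 → ℝ)) :=
  insert (LinearMap.ker (fn3 0 0 1)) (A2n1Arr (2 * m))

end Concrete

end

section Submodule

variable {K : Type*} [Field K] {V : Type*} [AddCommGroup V] [Module K V]
  {W : Type*} [AddCommGroup W] [Module K W]

theorem Submodule.prod_le_prod_iff {X₁ X₂ : Submodule K V} {Y₁ Y₂ : Submodule K W} :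
    X₁.prod Y₁ ≤ X₂.prod Y₂ ↔ X₁ ≤ X₂ ∧ Y₁ ≤ Y₂ := by
  refine ⟨fun h => ⟨?_, ?_⟩, fun h => Submodule.prod_mono h.1 h.2⟩
  · simpa only [Submodule.prod_comap_inl] using
      Submodule.comap_mono (f := LinearMap.inl K V W) h
  · simpa only [Submodule.prod_comap_inr] using
      Submodule.comap_mono (f := LinearMap.inr K V W) h

theorem Submodule.prod_eq_prod_iff {X₁ X₂ : Submodule K V} {Y₁ Y₂ : Submodule K W} :
    X₁.prod Y₁ = X₂.prod Y₂ ↔ X₁ = X₂ ∧ Y₁ = Y₂ := by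
  simp only [le_antisymm_iff, Submodule.prod_le_prod_iff]
  tauto

theorem Submodule.prod_injective :
    Function.Injective fun p : Submodule K V × Submodule K W => p.1.prod p.2 :=
  fun _ _ h => Prod.ext_iff.mpr (Submodule.prod_eq_prod_iff.mp h)

def Submodule.prodEquiv (X : Submodule K V) (Y : Submodule K W) : X.prod Y ≃ₗ[K] X × Y where
  toFun z := (⟨z.1.1, z.2.1⟩, ⟨z.1.2, z.2.2⟩)
  invFun p := ⟨(p.1, p.2), p.1.2, p.2.2⟩
  map_add' _ _ := rfl
  map_smul' _ _ := rfl

theorem Submodule.map_prodEquiv_comap_prod (X : Submodule K V) (Y : Submodule K W)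
    (H₁ : Submodule K V) (H₂ : Submodule K W) :
    ((H₁.prod H₂).comap (X.prod Y).subtype).map (X.prodEquiv Y : X.prod Y →ₗ[K] X × Y) =
      (H₁.comap X.subtype).prod (H₂.comap Y.subtype) := by
  rw [Submodule.map_equiv_eq_comap_symm, ← Submodule.comap_comp]
  exact LinearMap.prodMap_comap_prod X.subtype Y.subtype H₁ H₂

theorem Submodule.finrank_prod [FiniteDimensional K V] [FiniteDimensional K W]
    (X : Submodule K V) (Y : Submodule K W) :
    Module.finrank K (X.prod Y) = Module.finrank K X + Module.finrank K Y := by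
  rw [(Submodule.prodEquiv X Y).finrank_eq, Module.finrank_prod]

end Submodule

theorem Finset.filter_le_eq_insert_filter_lt {α : Type*} [PartialOrder α] [DecidableEq α]
    {s : Finset α} {a : α} [DecidablePred (a ≤ ·)] [DecidablePred (a < ·)] (ha : a ∈ s) :
    s.filter (a ≤ ·) = insert a (s.filter (a < ·)) := by
  ext b
  simp only [Finset.mem_filter, Finset.mem_insert, le_iff_eq_or_lt]
  constructor
  · rintro ⟨hb, rfl | hab⟩
    exacts [Or.inl rfl, Or.inr ⟨hb, hab⟩]
  · rintro (rfl | ⟨hb, hab⟩)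
    exacts [⟨ha, Or.inl rfl⟩, ⟨hb, Or.inr hab⟩]

section Lattice

variable {K : Type*} [Field K] {V : Type*} [AddCommGroup V] [Module K V]
  {W : Type*} [AddCommGroup W] [Module K W]

theorem IsLinHyperplane.ne_top {H : Submodule K V} (hH : IsLinHyperplane H) : H ≠ ⊤ := by
  obtain ⟨f, hf, rfl⟩ := hH
  rwa [Ne, LinearMap.ker_eq_top]

theorem mem_interLat_iff {A : Finset (Submodule K V)} {X : Submodule K V} :
    X ∈ interLat A ↔ ∃ S ⊆ A, S.inf id = X := by
  simp [interLat]

theorem top_mem_interLat (A : Finset (Submodule K V)) : ⊤ ∈ interLat A :=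
  mem_interLat_iff.mpr ⟨∅, Finset.empty_subset A, Finset.inf_empty⟩

theorem finsetInf_image_map_equiv (e : V ≃ₗ[K] W) (S : Finset (Submodule K V)) :
    (S.image (Submodule.map (e : V →ₗ[K] W))).inf id = (S.inf id).map (e : V →ₗ[K] W) := by
  simp only [Finset.inf_image, Function.comp_def, id, Submodule.map_equiv_eq_comap_symm,
    Submodule.comap_finsetInf]

theorem interLat_image_map_equiv (e : V ≃ₗ[K] W) (A : Finset (Submodule K V)) :
    interLat (A.image (Submodule.map (e : V →ₗ[K] W))) =
      (interLat A).image (Submodule.map (e : V →ₗ[K] W)) := by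
  ext Z
  simp only [mem_interLat_iff, Finset.mem_image, Finset.subset_image_iff]
  constructor
  · rintro ⟨_, ⟨S, hS, rfl⟩, rfl⟩
    exact ⟨S.inf id, ⟨S, hS, rfl⟩, (finsetInf_image_map_equiv e S).symm⟩
  · rintro ⟨_, ⟨S, hS, rfl⟩, rfl⟩
    exact ⟨_, ⟨S, hS, rfl⟩, finsetInf_image_map_equiv e S⟩

theorem finsetInf_prodArr (S₁ : Finset (Submodule K V)) (S₂ : Finset (Submodule K W)) :
    (prodArr S₁ S₂).inf id = (S₁.inf id).prod (S₂.inf id) := by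
  have h₁ : S₁.inf (id ∘ fun X => X.prod ⊤) = (S₁.inf id).prod (⊤ : Submodule K W) :=
    (Finset.apply_inf_eq_inf_comp (fun X : Submodule K V => X.prod (⊤ : Submodule K W))
      (fun _ _ => by rw [Submodule.prod_inf_prod, inf_top_eq]) Submodule.prod_top).symm
  have h₂ : S₂.inf (id ∘ fun Y => (⊤ : Submodule K V).prod Y) =
      (⊤ : Submodule K V).prod (S₂.inf id) :=
    (Finset.apply_inf_eq_inf_comp (fun Y : Submodule K W => (⊤ : Submodule K V).prod Y)
      (fun _ _ => by rw [Submodule.prod_inf_prod, inf_top_eq]) Submodule.prod_top).symm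
  rw [prodArr, Finset.inf_union, Finset.inf_image, Finset.inf_image, h₁, h₂,
    Submodule.prod_inf_prod, inf_top_eq, top_inf_eq]

theorem subset_prodArr_iff {A : Finset (Submodule K V)} {B : Finset (Submodule K W)}
    {S : Finset (Submodule K (V × W))} :
    S ⊆ prodArr A B ↔ ∃ S₁ ⊆ A, ∃ S₂ ⊆ B, prodArr S₁ S₂ = S := by
  constructor
  · intro hS
    refine ⟨A.filter (·.prod ⊤ ∈ S), Finset.filter_subset _ _,
      B.filter ((⊤ : Submodule K V).prod · ∈ S), Finset.filter_subset _ _, ?_⟩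
    ext Z
    simp only [prodArr, Finset.mem_union, Finset.mem_image, Finset.mem_filter]
    constructor
    · rintro (⟨H, ⟨-, hZ⟩, rfl⟩ | ⟨H, ⟨-, hZ⟩, rfl⟩) <;> exact hZ
    · intro hZ
      rcases Finset.mem_union.mp (hS hZ) with h | h <;>
        obtain ⟨H, hH, rfl⟩ := Finset.mem_image.mp h
      exacts [Or.inl ⟨H, ⟨hH, hZ⟩, rfl⟩, Or.inr ⟨H, ⟨hH, hZ⟩, rfl⟩]
  · rintro ⟨S₁, h₁, S₂, h₂, rfl⟩
    exact Finset.union_subset_union (Finset.image_subset_image h₁)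
      (Finset.image_subset_image h₂)

theorem interLat_prodArr (A : Finset (Submodule K V)) (B : Finset (Submodule K W)) :
    interLat (prodArr A B) = (interLat A ×ˢ interLat B).image fun p => p.1.prod p.2 := by
  ext Z
  simp only [mem_interLat_iff, subset_prodArr_iff, Finset.mem_image, Finset.mem_product]
  constructor
  · rintro ⟨_, ⟨S₁, h₁, S₂, h₂, rfl⟩, rfl⟩
    exact ⟨(S₁.inf id, S₂.inf id), ⟨⟨S₁, h₁, rfl⟩, ⟨S₂, h₂, rfl⟩⟩,
      (finsetInf_prodArr S₁ S₂).symm⟩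
  · rintro ⟨⟨_, _⟩, ⟨⟨S₁, h₁, rfl⟩, ⟨S₂, h₂, rfl⟩⟩, rfl⟩
    exact ⟨_, ⟨S₁, h₁, S₂, h₂, rfl⟩, finsetInf_prodArr S₁ S₂⟩

theorem resArr_prodArr (A : Finset (Submodule K V)) (B : Finset (Submodule K W))
    (X : Submodule K V) (Y : Submodule K W) :
    (resArr (prodArr A B) (X.prod Y)).image
        (Submodule.map (X.prodEquiv Y : X.prod Y →ₗ[K] X × Y)) =
      prodArr (resArr A X) (resArr B Y) := by
  simp only [resArr, prodArr, Finset.filter_union, Finset.filter_image, Finset.image_union,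
    Finset.image_image, Function.comp_def, Submodule.prod_le_prod_iff, le_top, and_true,
    true_and, Submodule.map_prodEquiv_comap_prod, Submodule.comap_top]

theorem resArr_top {A : Finset (Submodule K V)} (hA : ⊤ ∉ A) :
    (resArr A ⊤).image
      (Submodule.map (Submodule.topEquiv : (⊤ : Submodule K V) ≃ₗ[K] V).toLinearMap) = A := by
  have hA' : ∀ H ∈ A, ¬(⊤ : Submodule K V) ≤ H := fun H hH h => hA (top_le_iff.mp h ▸ hH)
  rw [resArr, Finset.image_image, Finset.filter_true_of_mem hA']
  conv_rhs => rw [← Finset.image_id (s := A)]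
  refine Finset.image_congr fun H _ => ?_
  rw [Function.comp_apply, Submodule.map_equiv_eq_comap_symm, ← Submodule.comap_comp]
  rfl

end Lattice

section Moebius

variable {K : Type*} [Field K] {V : Type*} [AddCommGroup V] [Module K V] [FiniteDimensional K V]
  {W : Type*} [AddCommGroup W] [Module K W] [FiniteDimensional K W]

theorem arrMoebius_eq (A : Finset (Submodule K V)) (X : Submodule K V) :
    arrMoebius A X =
      if X = ⊤ then 1 else -∑ Y ∈ (interLat A).filter (X < ·), arrMoebius A Y := by
  rw [arrMoebius, Finset.sum_attach]

theorem arrMoebius_top (A : Finset (Submodule K V)) : arrMoebius A ⊤ = 1 := by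
  rw [arrMoebius_eq, if_pos rfl]

theorem sum_arrMoebius (A : Finset (Submodule K V)) {X : Submodule K V} (hX : X ∈ interLat A) :
    ∑ Y ∈ (interLat A).filter (X ≤ ·), arrMoebius A Y = if X = ⊤ then 1 else 0 := by
  rw [Finset.filter_le_eq_insert_filter_lt hX, Finset.sum_insert (by simp)]
  split_ifs with hT
  · subst hT
    simp [arrMoebius_top]
  · rw [arrMoebius_eq, if_neg hT, neg_add_cancel]

theorem eq_arrMoebius_of_sum_eq_zero {A : Finset (Submodule K V)} {f : Submodule K V → ℤ}
    (htop : f ⊤ = 1)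
    (hsum : ∀ X ∈ interLat A, X ≠ ⊤ → ∑ Y ∈ (interLat A).filter (X ≤ ·), f Y = 0)
    {X : Submodule K V} (hX : X ∈ interLat A) : f X = arrMoebius A X := by
  induction X using WellFoundedGT.induction with
  | _ X ih =>
    by_cases hT : X = ⊤
    · rw [hT, htop, arrMoebius_top]
    have hf : f X = -∑ Y ∈ (interLat A).filter (X < ·), f Y := by
      have hX₀ := hsum X hX hT
      rw [Finset.filter_le_eq_insert_filter_lt hX, Finset.sum_insert (by simp)] at hX₀
      exact eq_neg_of_add_eq_zero_left hX₀
    rw [hf, arrMoebius_eq, if_neg hT]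
    congr 1
    refine Finset.sum_congr rfl fun Y hY => ?_
    obtain ⟨hYA, hXY⟩ := Finset.mem_filter.mp hY
    exact ih Y hXY hYA

theorem arrMoebius_image_map_equiv (e : V ≃ₗ[K] W) (A : Finset (Submodule K V))
    {X : Submodule K V} (hX : X ∈ interLat A) :
    arrMoebius (A.image (Submodule.map (e : V →ₗ[K] W))) (X.map (e : V →ₗ[K] W)) =
      arrMoebius A X := by
  set φ := Submodule.orderIsoMapComap e
  set B := A.image (Submodule.map (e : V →ₗ[K] W))
  have hφ : Submodule.map (e : V →ₗ[K] W) = φ :=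
    funext fun X => (Submodule.orderIsoMapComap_apply e X).symm
  have hL : interLat B = (interLat A).image φ := by rw [interLat_image_map_equiv, hφ]
  rw [hφ]
  refine eq_arrMoebius_of_sum_eq_zero (f := fun X => arrMoebius B (φ X))
    (by rw [φ.map_top, arrMoebius_top]) (fun Y hY hT => ?_) hX
  have hsum := sum_arrMoebius B (hL ▸ Finset.mem_image_of_mem φ hY)
  rw [hL, Finset.filter_image, Finset.sum_image φ.injective.injOn] at hsum
  simpa only [φ.le_iff_le, map_eq_top_iff, hT, if_false] using hsum

theorem charPolyAt_image_map_equiv (e : V ≃ₗ[K] W) (A : Finset (Submodule K V)) (t : ℤ) :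
    charPolyAt (A.image (Submodule.map (e : V →ₗ[K] W))) t = charPolyAt A t := by
  rw [charPolyAt, interLat_image_map_equiv,
    Finset.sum_image (Submodule.map_injective_of_injective e.injective).injOn]
  refine Finset.sum_congr rfl fun X hX => ?_
  rw [arrMoebius_image_map_equiv e A hX, LinearEquiv.finrank_map_eq]

theorem arrMoebius_prodArr (A : Finset (Submodule K V)) (B : Finset (Submodule K W))
    {X : Submodule K V} {Y : Submodule K W} (hX : X ∈ interLat A) (hY : Y ∈ interLat B) :
    arrMoebius (prodArr A B) (X.prod Y) = arrMoebius A X * arrMoebius B Y := by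
  set f : Submodule K (V × W) → ℤ := fun Z =>
    arrMoebius A (Z.comap (LinearMap.inl K V W)) * arrMoebius B (Z.comap (LinearMap.inr K V W))
  have hf : ∀ X Y, f (X.prod Y) = arrMoebius A X * arrMoebius B Y := fun X Y => by
    simp only [f, Submodule.prod_comap_inl, Submodule.prod_comap_inr]
  rw [← hf]
  refine (eq_arrMoebius_of_sum_eq_zero (A := prodArr A B) ?_ ?_ ?_).symm
  · rw [← Submodule.prod_top, hf, arrMoebius_top, arrMoebius_top, mul_one]
  · rw [interLat_prodArr]
    rintro _ hZ hT
    obtain ⟨⟨X', Y'⟩, hXY', rfl⟩ := Finset.mem_image.mp hZ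
    obtain ⟨hX', hY'⟩ := Finset.mem_product.mp hXY'
    rw [Finset.filter_image, Finset.sum_image Submodule.prod_injective.injOn]
    simp only [Submodule.prod_le_prod_iff, hf]
    rw [Finset.filter_product, Finset.sum_product, ← Finset.sum_mul_sum, sum_arrMoebius A hX',
      sum_arrMoebius B hY']
    rw [Ne, Submodule.prod_eq_top_iff, not_and_or] at hT
    rcases hT with hT | hT <;> simp [hT]
  · rw [interLat_prodArr]
    exact Finset.mem_image.mpr ⟨(X, Y), Finset.mem_product.mpr ⟨hX, hY⟩, rfl⟩

theorem charPolyAt_prodArr (A : Finset (Submodule K V)) (B : Finset (Submodule K W)) (t : ℤ) :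
    charPolyAt (prodArr A B) t = charPolyAt A t * charPolyAt B t := by
  rw [charPolyAt, interLat_prodArr, Finset.sum_image Submodule.prod_injective.injOn,
    Finset.sum_product, charPolyAt, charPolyAt, Finset.sum_mul_sum]
  refine Finset.sum_congr rfl fun X hX => Finset.sum_congr rfl fun Y hY => ?_
  rw [arrMoebius_prodArr A B hX hY, Submodule.finrank_prod, pow_add]
  ring

theorem charPolyAt_resArr_prodArr (A : Finset (Submodule K V)) (B : Finset (Submodule K W))
    (X : Submodule K V) (Y : Submodule K W) (t : ℤ) :
    charPolyAt (resArr (prodArr A B) (X.prod Y)) t =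
      charPolyAt (resArr A X) t * charPolyAt (resArr B Y) t := by
  rw [← charPolyAt_image_map_equiv (X.prodEquiv Y), resArr_prodArr, charPolyAt_prodArr]

theorem charPolyAt_resArr_top {A : Finset (Submodule K V)} (hA : ⊤ ∉ A) (t : ℤ) :
    charPolyAt (resArr A ⊤) t = charPolyAt A t := by
  rw [← charPolyAt_image_map_equiv Submodule.topEquiv, resArr_top hA]

theorem sum_abs_charPolyAt_resArr_prodArr {A : Finset (Submodule K V)}
    {B : Finset (Submodule K W)} (hA : ⊤ ∉ A) (hB : ⊤ ∉ B) (t : ℤ) :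
    ∑ Z ∈ prodArr A B, |charPolyAt (resArr (prodArr A B) Z) t| =
      (∑ H ∈ A, |charPolyAt (resArr A H) t|) * |charPolyAt B t| +
        |charPolyAt A t| * ∑ H ∈ B, |charPolyAt (resArr B H) t| := by
  have hdisj : Disjoint (A.image (·.prod (⊤ : Submodule K W)))
      (B.image ((⊤ : Submodule K V).prod ·)) := by
    refine Finset.disjoint_left.mpr fun Z h₁ h₂ => ?_
    obtain ⟨H, hH, rfl⟩ := Finset.mem_image.mp h₁
    obtain ⟨H', -, hH'⟩ := Finset.mem_image.mp h₂
    exact hA (by rwa [(Submodule.prod_eq_prod_iff.mp hH').1])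
  nth_rw 1 [prodArr]
  rw [Finset.sum_union hdisj,
    Finset.sum_image fun _ _ _ _ h => (Submodule.prod_eq_prod_iff.mp h).1,
    Finset.sum_image fun _ _ _ _ h => (Submodule.prod_eq_prod_iff.mp h).2,
    Finset.sum_mul, Finset.mul_sum]
  congr 1 <;> refine Finset.sum_congr rfl fun H _ => ?_
  · rw [charPolyAt_resArr_prodArr, charPolyAt_resArr_top hB, abs_mul]
  · rw [charPolyAt_resArr_prodArr, charPolyAt_resArr_top hA, abs_mul]

theorem sInvariant_prodArr {A : Finset (Submodule K V)} {B : Finset (Submodule K W)}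
    (hA : ⊤ ∉ A) (hB : ⊤ ∉ B) :
    sInvariant (prodArr A B) =
      sInvariant A * |charPolyAt B (-1)| + |charPolyAt A (-1)| * sInvariant B := by
  rw [sInvariant, sInvariant, sInvariant, Module.finrank_prod, charPolyAt_prodArr, abs_mul,
    sum_abs_charPolyAt_resArr_prodArr hA hB]
  push_cast
  ring

end Moebius

/-- The product of two combinatorially simplicial arrangements (over any field)
is combinatorially simplicial. -/
theorem comb_simplicial_product {K : Type*} [Field K] (l1 l2 : ℕ)
    (A₁ : Finset (Submodule K (Fin l1 → K))) (A₂ : Finset (Submodule K (Fin l2 → K)))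
    (h₁ : ∀ H ∈ A₁, IsLinHyperplane H) (h₂ : ∀ H ∈ A₂, IsLinHyperplane H)
    (hs₁ : sInvariant A₁ = 0) (hs₂ : sInvariant A₂ = 0) :
    sInvariant (prodArr A₁ A₂) = 0 := by
  rw [sInvariant_prodArr (fun h => (h₁ ⊤ h).ne_top rfl) (fun h => (h₂ ⊤ h).ne_top rfl),
    hs₁, hs₂, zero_mul, mul_zero, add_zero]
end

section
/- Let A be a simplicial ℓ-arrangement in ℝ^ℓ, K a chamber with basis B^K = {α_1,…,α_ℓ}, and 1 ≤ i ≤ ℓ. Then there exist real numbers c^K_{ij} (1 ≤ j ≤ ℓ) such that {α_j − c^K_{ij}α_i : j = 1,…,ℓ} is a basis for the adjacent chamber K_i. Moreover, for j ≠ i one has c^K_{ij} ≤ 0 and c^K_{ij} is uniquely determined by B^K, while for j = i one has c^K_{ii} > 1. -/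
open scoped Classical

/-
The chamber `C` is the open cone of the basis `e` dual to `α`. For small `δ > 0` the thin wedge
`{αᵢ < 0, -αᵢ < δ αⱼ (j ≠ i)}` just across the wall `αᵢ^⊥` meets no hyperplane of `A`. The
adjacent chamber `C'` contains points near the relative interior of the common facet, which lie
either in `C` or in that wedge; so the wedge lies in `C'`. Hence `C' ⊆ {αᵢ < 0, αⱼ > 0 (j ≠ i)}`
and the closure of `C'` contains the facet `F = {αᵢ = 0, α ≥ 0}` of `C`. As `C'` is simplicial
with wall `αᵢ^⊥`, its closure is the cone over `F` and one extreme ray `v` with `αᵢ v < 0`, whose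
dual basis is `αⱼ - cⱼ αᵢ` with `cⱼ = αⱼ v / αᵢ v ≤ 0` for `j ≠ i` and `cᵢ = 1 - 1 / αᵢ v > 1`.
For `j ≠ i` the wall `(αⱼ - cⱼ αᵢ)^⊥` of `C'` determines `cⱼ`.
-/

open Module Set Filter Topology

section LinearAlgebra

variable {K V ι : Type*} [Field K] [AddCommGroup V] [Module K V]

namespace Module.Basis

lemma apply_eq_sum_coord_mul [Fintype ι] (b : Basis ι K V) (f : V →ₗ[K] K) (x : V) :
    f x = ∑ k, b.coord k x * f (b k) := by
  conv_lhs => rw [← b.sum_repr x, map_sum]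
  simp

lemma coord_ne_zero (b : Basis ι K V) (j : ι) : b.coord j ≠ 0 := fun h => by
  simpa using LinearMap.congr_fun h (b j)

lemma injective_ker_coord (b : Basis ι K V) :
    Function.Injective fun j => LinearMap.ker (b.coord j) := by
  intro j k hjk
  by_contra hne
  have : b k ∈ LinearMap.ker (b.coord j) := by simp [Ne.symm hne]
  simp_all

lemma eq_of_ker_coord_sub_smul_eq (e : Basis ι K V) {i j k : ι} (hj : j ≠ i) {c c' : K}
    (h : LinearMap.ker (e.coord j - c • e.coord i) = LinearMap.ker (e.coord k - c' • e.coord i)) :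
    k = j ∧ c' = c := by
  have mem : ∀ x, (e.coord j - c • e.coord i) x = 0 ↔ (e.coord k - c' • e.coord i) x = 0 :=
    fun x => by rw [← LinearMap.mem_ker, h, LinearMap.mem_ker]
  obtain rfl : k = j := by
    by_contra hkj
    by_cases hki : k = i
    · subst hki
      simpa [hj] using (mem (e j)).2 (by simp [hj])
    · simpa [hki] using (mem (e k)).1 (by simp [Ne.symm hkj, Ne.symm hki])
  refine ⟨rfl, ?_⟩
  simpa [hj, Ne.symm hj, sub_eq_zero, eq_comm] using (mem (e i + c • e k)).1 (by simp [hj])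

end Module.Basis

lemma exists_basis_of_biorthogonal [Fintype ι] [DecidableEq ι] [FiniteDimensional K V]
    (γ : ι → V →ₗ[K] K) (u : ι → V) (h : ∀ j k, γ j (u k) = if j = k then 1 else 0)
    (hcard : Fintype.card ι = finrank K V) :
    ∃ b : Basis ι K V, ⇑b = u ∧ ∀ j, b.coord j = γ j := by
  have hli : LinearIndependent K u := by
    rw [Fintype.linearIndependent_iff]
    intro g hg j
    simpa [h] using congrArg (γ j) hg
  let b := basisOfLinearIndependentOfCardEqFinrank' u hli hcard
  have hb : ⇑b = u := by simp [b]
  refine ⟨b, hb, fun j => b.ext fun k => ?_⟩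
  rw [Basis.coord_apply, Basis.repr_self, hb, h, Finsupp.single_apply]
  simp [eq_comm]

end LinearAlgebra

lemma AddSubmonoid.exists_mem_forall_pos {V κ : Type*} [AddCommGroup V] [Module ℝ V]
    [Fintype κ] (S : AddSubmonoid V) (φ : κ → V →ₗ[ℝ] ℝ) (hS : ∀ x ∈ S, ∀ j, 0 ≤ φ j x)
    (h : ∀ j, ∃ x ∈ S, φ j x ≠ 0) :
    ∃ z ∈ S, ∀ j, 0 < φ j z := by
  choose x hxS hx using h
  refine ⟨∑ k, x k, S.sum_mem fun k _ => hxS k, fun j => ?_⟩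
  rw [map_sum]
  exact Finset.sum_pos' (fun k _ => hS _ (hxS k) j)
    ⟨j, Finset.mem_univ _, (hS _ (hxS j) j).lt_of_ne' (hx j)⟩

namespace Module.Basis

variable {V ι κ : Type*} [NormedAddCommGroup V] [NormedSpace ℝ V] (b : Basis ι ℝ V)

def openCone : Set V := {x | ∀ j, 0 < b.coord j x}

def closedCone : AddSubmonoid V where
  carrier := {x | ∀ j, 0 ≤ b.coord j x}
  add_mem' hx hy j := by simpa using add_nonneg (hx j) (hy j)
  zero_mem' := by simp

@[simp]
lemma mem_closedCone {x : V} : x ∈ b.closedCone ↔ ∀ j, 0 ≤ b.coord j x := Iff.rfl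

lemma basis_mem_closedCone (k : ι) : b k ∈ b.closedCone := fun j => by
  rw [coord_apply, repr_self, Finsupp.single_apply]
  split_ifs <;> norm_num

lemma span_ker_coord_inter_closedCone (m : ι) :
    Submodule.span ℝ (LinearMap.ker (b.coord m) ∩ b.closedCone : Set V) =
      LinearMap.ker (b.coord m) := by
  refine le_antisymm (Submodule.span_le.2 inter_subset_left) fun x hx => ?_
  rw [← b.linearCombination_repr x, Finsupp.linearCombination_apply]
  refine Submodule.finsuppSum_mem _ _ _ _ fun k _ => ?_
  rcases eq_or_ne k m with rfl | hkm
  · rw [← b.coord_apply, LinearMap.mem_ker.1 hx, zero_smul]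
    exact Submodule.zero_mem _
  · exact Submodule.smul_mem _ _ (Submodule.subset_span
      ⟨by simp [Ne.symm hkm], b.basis_mem_closedCone k⟩)

variable [Fintype ι]

lemma closedCone_le_iff (b' : Basis κ ℝ V) :
    b.closedCone ≤ b'.closedCone ↔ ∀ k, b k ∈ b'.closedCone := by
  refine ⟨fun h k => h (b.basis_mem_closedCone k), fun h x hx j => ?_⟩
  rw [b.apply_eq_sum_coord_mul (b'.coord j) x]
  exact Finset.sum_nonneg fun k _ => mul_nonneg (hx k) (h k j)

lemma exists_mem_pos_of_span_eq_ker {i : ι} (S : AddSubmonoid V) (hS : S ≤ b.closedCone)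
    (hspan : Submodule.span ℝ (S : Set V) = LinearMap.ker (b.coord i)) :
    ∃ z ∈ S, b.coord i z = 0 ∧ ∀ j ≠ i, 0 < b.coord j z := by
  obtain ⟨z, hzS, hz⟩ := S.exists_mem_forall_pos (fun j : {j // j ≠ i} => b.coord j)
    (fun x hx j => hS hx j) fun j => by
      by_contra! h
      have hle : LinearMap.ker (b.coord i) ≤ LinearMap.ker (b.coord j) :=
        hspan ▸ Submodule.span_le.2 h
      simpa using hle (show b j ∈ LinearMap.ker (b.coord i) by simp [j.2])
  exact ⟨z, hzS, LinearMap.mem_ker.1 (hspan ▸ Submodule.subset_span hzS), fun j hj => hz ⟨j, hj⟩⟩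

lemma openCone_eq_preimage : b.openCone = b.equivFunL ⁻¹' univ.pi fun _ => Ioi 0 := by
  ext; simp [openCone]

lemma closedCone_eq_preimage :
    (b.closedCone : Set V) = b.equivFunL ⁻¹' univ.pi fun _ => Ici 0 := by
  ext; simp [Pi.le_def]

lemma closure_openCone : closure b.openCone = b.closedCone := by
  rw [openCone_eq_preimage, closedCone_eq_preimage, ← b.equivFunL.preimage_closure,
    closure_pi_set]
  simp

lemma interior_closedCone : interior b.closedCone = b.openCone := by
  rw [openCone_eq_preimage, closedCone_eq_preimage, ← ContinuousLinearEquiv.coe_toHomeomorph,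
    ← Homeomorph.preimage_interior, interior_pi_set finite_univ]
  simp

end Module.Basis

lemma IsOpenSimplicialCone.exists_eq_openCone {V : Type*} [NormedAddCommGroup V]
    [NormedSpace ℝ V] {C : Set V} (hC : IsOpenSimplicialCone C) :
    ∃ b : Basis (Fin (finrank ℝ V)) ℝ V, C = b.openCone := by
  obtain ⟨b, rfl⟩ := hC
  refine ⟨b, Set.ext fun x => ⟨?_, fun hx => ⟨fun j => b.coord j x, hx, (b.sum_repr x).symm⟩⟩⟩
  rintro ⟨c, hc, rfl⟩ j
  simpa [Finsupp.single_apply] using hc j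

section Chambers

variable {V : Type*} [NormedAddCommGroup V] [NormedSpace ℝ V] {A : Finset (Submodule ℝ V)}
  {C C' : Set V}

def arrComplement (A : Finset (Submodule ℝ V)) : Set V := (⋃ H ∈ A, (H : Set V))ᶜ

lemma notMem_of_mem_arrComplement {x : V} (hx : x ∈ arrComplement A) {H : Submodule ℝ V}
    (hH : H ∈ A) : x ∉ H :=
  fun hxH => hx (mem_biUnion hH hxH)

namespace IsChamberOf

lemma subset_arrComplement (hC : IsChamberOf A C) : C ⊆ arrComplement A := by
  obtain ⟨x, -, rfl⟩ := hC
  exact connectedComponentIn_subset _ _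

lemma nonempty (hC : IsChamberOf A C) : C.Nonempty := by
  obtain ⟨x, hx, rfl⟩ := hC
  exact ⟨x, mem_connectedComponentIn hx⟩

lemma isPreconnected (hC : IsChamberOf A C) : IsPreconnected C := by
  obtain ⟨x, -, rfl⟩ := hC
  exact isPreconnected_connectedComponentIn

lemma subset_of_isPreconnected (hC : IsChamberOf A C) {s : Set V} (hs : IsPreconnected s)
    (hsA : s ⊆ arrComplement A) (hsC : (s ∩ C).Nonempty) : s ⊆ C := by
  obtain ⟨x, -, rfl⟩ := hC
  obtain ⟨y, hys, hyC⟩ := hsC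
  rw [connectedComponentIn_eq hyC]
  exact hs.subset_connectedComponentIn hys hsA

lemma eq_of_mem (hC : IsChamberOf A C) (hC' : IsChamberOf A C') {x : V} (hxC : x ∈ C)
    (hxC' : x ∈ C') : C = C' := by
  obtain ⟨y, -, rfl⟩ := hC
  obtain ⟨y', -, rfl⟩ := hC'
  rw [connectedComponentIn_eq hxC, connectedComponentIn_eq hxC']

lemma mem_of_mem_closure (hC : IsChamberOf A C) {x : V} (hx : x ∈ closure C)
    (hxA : x ∈ arrComplement A) : x ∈ C := by
  have hpre : IsPreconnected (insert x C) :=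
    hC.isPreconnected.subset_closure (subset_insert _ _) (insert_subset hx subset_closure)
  obtain ⟨y, hy⟩ := hC.nonempty
  exact hC.subset_of_isPreconnected hpre (insert_subset hxA hC.subset_arrComplement)
    ⟨y, mem_insert_of_mem _ hy, hy⟩ (mem_insert x C)

variable [FiniteDimensional ℝ V]

lemma pos_or_neg (hC : IsChamberOf A C) {f : V →ₗ[ℝ] ℝ} (hf : LinearMap.ker f ∈ A) :
    (∀ x ∈ C, 0 < f x) ∨ ∀ x ∈ C, f x < 0 := by
  by_contra! h
  obtain ⟨⟨x, hxC, hx⟩, y, hyC, hy⟩ := h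
  obtain ⟨z, hzC, hz⟩ := hC.isPreconnected.intermediate_value hxC hyC
    f.continuous_of_finiteDimensional.continuousOn ⟨hx, hy⟩
  exact notMem_of_mem_arrComplement (hC.subset_arrComplement hzC) hf hz

lemma nonneg_of_mem_closure (hC : IsChamberOf A C) {f : V →ₗ[ℝ] ℝ} (hf : LinearMap.ker f ∈ A)
    {p : V} (hp : p ∈ C) (hfp : 0 < f p) {x : V} (hx : x ∈ closure C) : 0 ≤ f x := by
  have hpos : C ⊆ {x | 0 < f x} :=
    (hC.pos_or_neg hf).resolve_right fun h => (h p hp).not_gt hfp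
  exact closure_lt_subset_le continuous_const f.continuous_of_finiteDimensional
    (closure_mono hpos hx)

end IsChamberOf

end Chambers

lemma IsAdjChamber.isWallOf {V : Type*} [NormedAddCommGroup V] [NormedSpace ℝ V]
    {A : Finset (Submodule ℝ V)} {C C' : Set V} {H : Submodule ℝ V}
    (hC' : IsAdjChamber A C C' H) (hH : IsWallOf A C H) : IsWallOf A C' H := by
  obtain ⟨-, -, hspan⟩ := hC'
  have key : ∀ D, closure C ∩ closure C' ⊆ closure D →
      Submodule.span ℝ ((H : Set V) ∩ closure D) = H := fun D hD => by
    refine le_antisymm (Submodule.span_le.2 inter_subset_left) ?_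
    conv_lhs => rw [← hspan]
    exact Submodule.span_mono fun x hx => ⟨hspan ▸ Submodule.subset_span hx, hD hx⟩
  refine ⟨hH.1, ?_⟩
  rw [key C' inter_subset_right, ← key C inter_subset_left]
  exact hH.2

section Walls

variable {V ι : Type*} [NormedAddCommGroup V] [NormedSpace ℝ V] [FiniteDimensional ℝ V]
  [Fintype ι] {A : Finset (Submodule ℝ V)} {b : Basis ι ℝ V}
  (hhyp : ∀ H ∈ A, IsLinHyperplane H) (hD : IsChamberOf A b.openCone)
include hhyp hD

namespace IsChamberOf

lemma exists_ker_eq_of_ne {H : Submodule ℝ V} (hH : H ∈ A) {m : ι}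
    (hHm : H ≠ LinearMap.ker (b.coord m)) :
    ∃ f : V →ₗ[ℝ] ℝ, LinearMap.ker f = H ∧ (∀ k, 0 ≤ f (b k)) ∧ ∃ k ≠ m, 0 < f (b k) := by
  obtain ⟨f₀, hf₀, rfl⟩ := hhyp H hH
  obtain ⟨f, hf, hker, p, hp, hfp⟩ : ∃ f : V →ₗ[ℝ] ℝ, f ≠ 0 ∧
      LinearMap.ker f = LinearMap.ker f₀ ∧ ∃ p ∈ b.openCone, 0 < f p := by
    obtain ⟨p, hp⟩ := hD.nonempty
    rcases hD.pos_or_neg hH with h | h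
    · exact ⟨f₀, hf₀, rfl, p, hp, h p hp⟩
    · exact ⟨-f₀, neg_ne_zero.2 hf₀, LinearMap.ker_neg f₀, p, hp, by simpa using h p hp⟩
  have hnonneg : ∀ k, 0 ≤ f (b k) := fun k =>
    hD.nonneg_of_mem_closure (hker ▸ hH) hp hfp
      (by rw [b.closure_openCone]; exact b.basis_mem_closedCone k)
  refine ⟨f, hker, hnonneg, ?_⟩
  by_contra! hzero
  have hf_eq : f = f (b m) • b.coord m := b.ext fun k => by
    rcases eq_or_ne k m with rfl | hkm
    · simp
    · simp [hkm, le_antisymm (hzero k hkm) (hnonneg k)]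
  have hfm : f (b m) ≠ 0 := fun h => hf (by simpa [h] using hf_eq)
  exact hHm (by rw [← hker, hf_eq, LinearMap.ker_smul _ _ hfm])

lemma notMem_of_ne_ker_coord {H : Submodule ℝ V} (hH : H ∈ A) {m : ι}
    (hHm : H ≠ LinearMap.ker (b.coord m)) {z : V} (hz : z ∈ b.closedCone)
    (hzpos : ∀ k ≠ m, 0 < b.coord k z) : z ∉ H := by
  obtain ⟨f, rfl, hnonneg, k, hkm, hk⟩ := hD.exists_ker_eq_of_ne hhyp hH hHm
  rw [LinearMap.mem_ker, b.apply_eq_sum_coord_mul f z]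
  exact (Finset.sum_pos' (fun j _ => mul_nonneg (hz j) (hnonneg j))
    ⟨k, Finset.mem_univ _, mul_pos (hzpos k hkm) hk⟩).ne'

/- `z` is in the closure of the chamber but not in it, hence on some hyperplane of `A`; the only
one that can contain it is the one through the whole facet. -/
lemma ker_coord_mem (m : ι) : LinearMap.ker (b.coord m) ∈ A := by
  obtain ⟨z, hcoord⟩ : ∃ z : V, ∀ k, b.coord k z = if k = m then 0 else 1 :=
    ⟨_, fun k => b.coord_equivFun_symm k _⟩
  have hz : z ∈ b.closedCone := fun k => by rw [hcoord]; split_ifs <;> norm_num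
  have hzpos : ∀ k ≠ m, 0 < b.coord k z := fun k hk => by simp [hcoord, hk]
  have hzA : z ∉ arrComplement A := fun hzA => by
    simpa [hcoord] using hD.mem_of_mem_closure (by rwa [b.closure_openCone]) hzA m
  obtain ⟨H, hH, hzH⟩ : ∃ H ∈ A, z ∈ H := by simpa [arrComplement] using hzA
  by_contra hm
  exact hD.notMem_of_ne_ker_coord hhyp hH (fun h => hm (h ▸ hH)) hz hzpos hzH

lemma isWallOf_ker_coord (m : ι) : IsWallOf A b.openCone (LinearMap.ker (b.coord m)) :=
  ⟨hD.ker_coord_mem hhyp m, by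
    rw [b.closure_openCone, b.span_ker_coord_inter_closedCone,
      Module.Dual.finrank_ker_add_one_of_ne_zero (b.coord_ne_zero m)]⟩

end IsChamberOf

lemma IsWallOf.exists_eq_ker_coord {H : Submodule ℝ V} (hH : IsWallOf A b.openCone H) :
    ∃ m, H = LinearMap.ker (b.coord m) := by
  obtain ⟨hHA, hdim⟩ := hH
  rw [b.closure_openCone] at hdim
  obtain ⟨m, hm⟩ : ∃ m, ∀ x ∈ H.toAddSubmonoid ⊓ b.closedCone, b.coord m x = 0 := by
    by_contra! h
    obtain ⟨z, hz, hzpos⟩ := (H.toAddSubmonoid ⊓ b.closedCone).exists_mem_forall_pos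
      (fun j => b.coord j) (fun x hx => hx.2) h
    exact notMem_of_mem_arrComplement (hD.subset_arrComplement hzpos) hHA hz.1
  obtain ⟨f, hf, rfl⟩ := hhyp H hHA
  have hle_ker : Submodule.span ℝ (LinearMap.ker f ∩ b.closedCone : Set V) ≤
      LinearMap.ker (b.coord m) :=
    Submodule.span_le.2 fun x hx => hm x hx
  have hle_H : Submodule.span ℝ (LinearMap.ker f ∩ b.closedCone : Set V) ≤ LinearMap.ker f :=
    Submodule.span_le.2 inter_subset_left
  have h₁ := Module.Dual.finrank_ker_add_one_of_ne_zero hf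
  have h₂ := Module.Dual.finrank_ker_add_one_of_ne_zero (b.coord_ne_zero m)
  exact ⟨m, (Submodule.eq_of_le_of_finrank_eq hle_H (by omega)).symm.trans
    (Submodule.eq_of_le_of_finrank_eq hle_ker (by omega))⟩

end Walls

section ChamberBasis

variable {V : Type*} [NormedAddCommGroup V] [NormedSpace ℝ V] [FiniteDimensional ℝ V]
  {A : Finset (Submodule ℝ V)} {C : Set V}

lemma IsChamberOf.isChamberBasis_coord {n : ℕ} {b : Basis (Fin n) ℝ V}
    (hhyp : ∀ H ∈ A, IsLinHyperplane H) (hD : IsChamberOf A b.openCone) :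
    IsChamberBasis A b.openCone fun j => b.coord j :=
  ⟨hD.isWallOf_ker_coord hhyp, fun _ hH => hH.exists_eq_ker_coord hhyp hD,
    b.injective_ker_coord, by ext; simp [Module.Basis.openCone]⟩

/- The walls of `C = b.openCone` are the coordinate hyperplanes of `b`, so each `α j` is a
multiple of a coordinate of `b`; suitably rescaled vectors of `b` form the dual basis of `α`. -/
lemma IsChamberBasis.exists_basis {ℓ : ℕ} {α : Fin ℓ → V →ₗ[ℝ] ℝ}
    (hhyp : ∀ H ∈ A, IsLinHyperplane H) (hsimp : IsSimplicialArr A) (hC : IsChamberOf A C)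
    (hα : IsChamberBasis A C α) : ∃ e : Basis (Fin ℓ) ℝ V, ∀ j, e.coord j = α j := by
  obtain ⟨b, rfl⟩ := (hsimp C hC).exists_eq_openCone
  have hb := hC.isChamberBasis_coord hhyp
  choose σ hσ using fun j => (hα.1 j).exists_eq_ker_coord hhyp hC
  have hσ_inj : σ.Injective := fun j k hjk => hα.2.2.1 (by simp only [hσ, hjk])
  have hσ_surj : σ.Surjective := fun m => by
    obtain ⟨j, hj⟩ := hα.2.1 _ (hb.1 m)
    exact ⟨j, b.injective_ker_coord ((hσ j).symm.trans hj.symm)⟩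
  have hα_apply : ∀ j k, α j (b (σ k)) = 0 ↔ j ≠ k := fun j k => by
    rw [← LinearMap.mem_ker, hσ, LinearMap.mem_ker, b.coord_apply, b.repr_self,
      Finsupp.single_apply]
    simp [hσ_inj.eq_iff, eq_comm]
  have hbi : ∀ j k, α j ((α k (b (σ k)))⁻¹ • b (σ k)) = if j = k then 1 else 0 := by
    intro j k
    rcases eq_or_ne j k with rfl | hjk
    · simp [inv_mul_cancel₀ (mt (hα_apply j j).1 (not_not.2 rfl))]
    · simp [hjk, (hα_apply j k).2 hjk]
  obtain ⟨e, -, he⟩ := exists_basis_of_biorthogonal α _ hbi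
    (by simpa using Fintype.card_of_bijective ⟨hσ_inj, hσ_surj⟩)
  exact ⟨e, he⟩

end ChamberBasis

section Adjacent

variable {V ι κ : Type*} [NormedAddCommGroup V] [NormedSpace ℝ V] {A : Finset (Submodule ℝ V)}

namespace Module.Basis

def outerWedge (e : Basis ι ℝ V) (i : ι) (δ : ℝ) : Set V :=
  {x | e.coord i x < 0 ∧ ∀ j ≠ i, -e.coord i x < δ * e.coord j x}

variable (e : Basis ι ℝ V) {i : ι} {δ : ℝ}

lemma coord_pos_of_mem_outerWedge (hδ : 0 ≤ δ) {x : V} (hx : x ∈ e.outerWedge i δ) {j : ι}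
    (hj : j ≠ i) : 0 < e.coord j x :=
  pos_of_mul_pos_right (by linarith [hx.1, hx.2 j hj]) hδ

lemma convex_outerWedge (i : ι) (δ : ℝ) : Convex ℝ (e.outerWedge i δ) := by
  intro x hx y hy a c ha hc hac
  refine ⟨?_, fun j hj => ?_⟩ <;> simp only [map_add, map_smul, smul_eq_mul]
  · rcases ha.eq_or_lt with rfl | ha
    · nlinarith [hy.1]
    · nlinarith [hx.1, hy.1]
  · rcases ha.eq_or_lt with rfl | ha
    · nlinarith [hy.2 j hj]
    · nlinarith [hx.2 j hj, hy.2 j hj]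

lemma add_smul_mem_outerWedge (hδ : 0 ≤ δ) {x p : V} (hx : x ∈ e.closedCone)
    (hxi : e.coord i x = 0) (hp : p ∈ e.outerWedge i δ) {s : ℝ} (hs : 0 < s) :
    x + s • p ∈ e.outerWedge i δ := by
  have hi : e.coord i (x + s • p) = s * e.coord i p := by
    rw [map_add, map_smul, hxi, smul_eq_mul, zero_add]
  refine ⟨hi ▸ mul_neg_of_pos_of_neg hs hp.1, fun j hj => ?_⟩
  have := mul_lt_mul_of_pos_left (hp.2 j hj) hs
  rw [hi, map_add, map_smul, smul_eq_mul]
  nlinarith [mul_nonneg hδ (hx j)]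

end Module.Basis

variable [FiniteDimensional ℝ V] [Fintype ι] (hhyp : ∀ H ∈ A, IsLinHyperplane H)
  {e : Basis ι ℝ V} (hC : IsChamberOf A e.openCone)
include hhyp hC

lemma IsChamberOf.exists_outerWedge_subset (i : ι) :
    ∃ δ > 0, e.outerWedge i δ ⊆ arrComplement A := by
  have key : ∀ H ∈ A, ∀ᶠ δ in 𝓝[>] (0 : ℝ), ∀ x ∈ e.outerWedge i δ, x ∉ H := by
    intro H hH
    by_cases hHi : H = LinearMap.ker (e.coord i)
    · subst hHi
      exact Eventually.of_forall fun δ x hx hxH => hx.1.ne (LinearMap.mem_ker.1 hxH)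
    obtain ⟨f, rfl, hf, k, hki, hk⟩ := hC.exists_ker_eq_of_ne hhyp hH hHi
    have hfi : 0 < f (e i) + 1 := by linarith [hf i]
    filter_upwards [Ioo_mem_nhdsGT (div_pos hk hfi)] with δ ⟨hδ, hδk⟩ x hx
    rw [lt_div_iff₀ hfi] at hδk
    have hxk := e.coord_pos_of_mem_outerWedge hδ.le hx hki
    have hsub : ∑ j ∈ {i, k}, e.coord j x * f (e j) ≤ ∑ j, e.coord j x * f (e j) :=
      Finset.sum_le_sum_of_subset_of_nonneg (Finset.subset_univ _) fun j _ hj =>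
        mul_nonneg (e.coord_pos_of_mem_outerWedge hδ.le hx (by simp_all)).le (hf j)
    rw [Finset.sum_pair (Ne.symm hki)] at hsub
    rw [LinearMap.mem_ker, e.apply_eq_sum_coord_mul f x]
    nlinarith [mul_le_mul_of_nonneg_right (hx.2 k hki).le (hf i), mul_lt_mul_of_pos_left hδk hxk]
  obtain ⟨δ, hδ, hδ0⟩ :=
    (((Filter.eventually_all_finset A).2 key).and self_mem_nhdsWithin).exists
  exact ⟨δ, hδ0, fun x hx => by simpa [arrComplement] using fun H hH => hδ H hH x hx⟩

variable [Fintype κ] {b' : Basis κ ℝ V} {i : ι}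
  (hC' : IsAdjChamber A e.openCone b'.openCone (LinearMap.ker (e.coord i)))
include hC'

lemma IsAdjChamber.exists_outerWedge_subset : ∃ δ > 0, e.outerWedge i δ ⊆ b'.openCone := by
  obtain ⟨hC'ch, hne, hspan⟩ := hC'
  rw [e.closure_openCone, b'.closure_openCone] at hspan
  obtain ⟨z, ⟨-, hzC'⟩, hzi, hzj⟩ :=
    e.exists_mem_pos_of_span_eq_ker (e.closedCone ⊓ b'.closedCone) inf_le_left hspan
  obtain ⟨δ, hδ, hW⟩ := hC.exists_outerWedge_subset hhyp i
  have hnear : ∀ᶠ x in 𝓝 z, ∀ j ≠ i, |e.coord i x| < δ * e.coord j x := by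
    refine eventually_all.2 fun j => ?_
    by_cases hj : j = i
    · exact Eventually.of_forall fun x h => absurd hj h
    · refine (ContinuousAt.eventually_lt
        (continuous_abs.comp (e.coord i).continuous_of_finiteDimensional).continuousAt
        (continuous_const.mul (e.coord j).continuous_of_finiteDimensional).continuousAt
        ?_).mono fun x hx _ => hx
      simpa [hzi] using mul_pos hδ (hzj j hj)
  have hzcl : z ∈ closure b'.openCone := by rw [b'.closure_openCone]; exact hzC'
  obtain ⟨x, hxC', hx⟩ := ((mem_closure_iff_frequently.1 hzcl).and_eventually hnear).exists
  rcases hC'ch.pos_or_neg (hC.ker_coord_mem hhyp i) with hpos | hneg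
  · have hxC : x ∈ e.openCone := fun j => by
      rcases eq_or_ne j i with rfl | hj
      · exact hpos x hxC'
      · exact pos_of_mul_pos_right ((abs_nonneg _).trans_lt (hx j hj)) hδ.le
    exact absurd (hC.eq_of_mem hC'ch hxC hxC').symm hne
  · refine ⟨δ, hδ, hC'ch.subset_of_isPreconnected (e.convex_outerWedge i δ).isPreconnected hW
      ⟨x, ⟨hneg x hxC', fun j hj => ?_⟩, hxC'⟩⟩
    have := hx j hj
    rwa [abs_of_neg (hneg x hxC')] at this

lemma IsAdjChamber.closedCone_subset_and_facet_subset :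
    (∀ x ∈ b'.closedCone, e.coord i x ≤ 0 ∧ ∀ j ≠ i, 0 ≤ e.coord j x) ∧
      ∀ x ∈ e.closedCone, e.coord i x = 0 → x ∈ b'.closedCone := by
  obtain ⟨δ, hδ, hW⟩ := hC'.exists_outerWedge_subset hhyp hC
  obtain ⟨p, hp⟩ : ∃ p : V, ∀ k, e.coord k p = if k = i then -(δ / 2) else 1 :=
    ⟨_, fun k => e.coord_equivFun_symm k _⟩
  have hpW : p ∈ e.outerWedge i δ := ⟨by simp [hp, hδ], fun j hj => by simp [hp, hj, hδ]⟩
  have hnonneg : ∀ {f : V →ₗ[ℝ] ℝ}, LinearMap.ker f ∈ A → 0 < f p →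
      ∀ x ∈ b'.closedCone, 0 ≤ f x := fun hf hfp x hx =>
    hC'.1.nonneg_of_mem_closure hf (hW hpW) hfp (by rwa [b'.closure_openCone])
  refine ⟨fun x hx => ⟨?_, fun j hj => hnonneg (hC.ker_coord_mem hhyp j) (by simp [hp, hj]) x hx⟩,
    fun x hx hxi => ?_⟩
  · simpa using hnonneg (f := -e.coord i)
      (by rw [LinearMap.ker_neg]; exact hC.ker_coord_mem hhyp i) (by simp [hp, hδ]) x hx
  · have htend : Tendsto (fun s : ℝ => x + s • p) (𝓝[>] 0) (𝓝 x) := by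
      have := ((continuous_const.add (continuous_id.smul continuous_const)).tendsto 0).mono_left
        (nhdsWithin_le_nhds (s := Ioi 0)) (f := fun s : ℝ => x + s • p)
      simpa using this
    rw [← SetLike.mem_coe, ← b'.closure_openCone]
    exact mem_closure_of_tendsto htend (eventually_nhdsWithin_of_forall fun s hs =>
      hW (e.add_smul_mem_outerWedge hδ.le hx hxi hpW hs))

end Adjacent

/- `v = b' m` is the extreme ray of `b'.closedCone` off the common facet; the new dual basis is
`e` with `e i` replaced by `v`. -/
lemma exists_basis_sub_smul_of_closedCone {V ι κ : Type*} [NormedAddCommGroup V]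
    [NormedSpace ℝ V] [Fintype ι] [Fintype κ] {e : Basis ι ℝ V} {b' : Basis κ ℝ V} {i : ι}
    {m : κ} (hker : LinearMap.ker (b'.coord m) = LinearMap.ker (e.coord i))
    (hside : ∀ x ∈ b'.closedCone, e.coord i x ≤ 0 ∧ ∀ j ≠ i, 0 ≤ e.coord j x)
    (hfacet : ∀ x ∈ e.closedCone, e.coord i x = 0 → x ∈ b'.closedCone) :
    ∃ c : ι → ℝ, ∃ e' : Basis ι ℝ V, (∀ j, e'.coord j = e.coord j - c j • e.coord i) ∧
      e'.openCone = b'.openCone ∧ (∀ j ≠ i, c j ≤ 0) ∧ 1 < c i := by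
  have : FiniteDimensional ℝ V := e.finiteDimensional_of_finite
  set v := b' m
  have hv : v ∈ b'.closedCone := b'.basis_mem_closedCone m
  have hker_iff : ∀ x, b'.coord m x = 0 ↔ e.coord i x = 0 := fun x => by
    rw [← LinearMap.mem_ker, hker, LinearMap.mem_ker]
  have ha : e.coord i v < 0 :=
    (hside v hv).1.lt_of_ne fun h => by simpa [v] using (hker_iff v).2 h
  set c : ι → ℝ := fun j => (e.coord j v - if j = i then 1 else 0) / e.coord i v
  have hbi : ∀ j k, (e.coord j - c j • e.coord i) (Function.update e i v k) =
      if j = k then 1 else 0 := by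
    intro j k
    rcases eq_or_ne k i with rfl | hk
    · have hc : c j * e.coord k v = e.coord j v - if j = k then 1 else 0 :=
        div_mul_cancel₀ _ ha.ne
      simp only [Function.update_self, LinearMap.sub_apply, LinearMap.smul_apply, smul_eq_mul, hc]
      ring
    · simp [hk, Finsupp.single_apply, eq_comm]
  obtain ⟨e', he', he'coord⟩ := exists_basis_of_biorthogonal _ _ hbi (finrank_eq_card_basis e).symm
  refine ⟨c, e', he'coord, ?_, fun j hj => ?_, ?_⟩
  · rw [← e'.interior_closedCone, ← b'.interior_closedCone]
    refine congrArg (interior ∘ SetLike.coe) (le_antisymm ((e'.closedCone_le_iff b').2 fun k => ?_)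
      ((b'.closedCone_le_iff e').2 fun n j => ?_))
    · rw [he']
      rcases eq_or_ne k i with rfl | hk
      · simpa using hv
      · simpa [hk] using hfacet (e k) (e.basis_mem_closedCone k) (by simp [Ne.symm hk])
    · rw [he'coord]
      rcases eq_or_ne n m with rfl | hn
      · have := hbi j i
        simp only [Function.update_self] at this
        rw [this]
        split_ifs <;> norm_num
      · have hi : e.coord i (b' n) = 0 := (hker_iff _).1 (by simp [Ne.symm hn])
        rcases eq_or_ne j i with rfl | hj
        · simp [hi]
        · simpa [hi] using (hside (b' n) (b'.basis_mem_closedCone n)).2 j hj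
  · simpa [c, hj] using div_nonpos_of_nonneg_of_nonpos ((hside v hv).2 j hj) ha.le
  · simp only [c, if_true]
    rw [lt_div_iff_of_neg ha]
    linarith

/-- Existence, sign and uniqueness of the coefficients `c^K_{ij}`: if `α` is a basis
for the chamber `K = C` and `C'` is the chamber adjacent to `C` across the wall `αᵢ^⊥`,
then there are reals `c j` such that `(α j - c j • α i)ⱼ` is a basis for `C'`;
for `j ≠ i` one has `c j ≤ 0` and `c j` is uniquely determined, while `c i > 1`. -/
theorem exists_unique_adjacent_coeffs (ℓ : ℕ)
    (A : Finset (Submodule ℝ (Fin ℓ → ℝ)))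
    (hhyp : ∀ H ∈ A, IsLinHyperplane H) (hsimp : IsSimplicialArr A)
    (C : Set (Fin ℓ → ℝ)) (hC : IsChamberOf A C)
    (α : Fin ℓ → ((Fin ℓ → ℝ) →ₗ[ℝ] ℝ)) (hα : IsChamberBasis A C α)
    (i : Fin ℓ) (C' : Set (Fin ℓ → ℝ))
    (hC' : IsAdjChamber A C C' (LinearMap.ker (α i))) :
    ∃ c : Fin ℓ → ℝ,
      IsChamberBasis A C' (fun j => α j - c j • α i) ∧
      (∀ j, j ≠ i → c j ≤ 0) ∧ 1 < c i ∧
      ∀ c' : Fin ℓ → ℝ,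
        IsChamberBasis A C' (fun j => α j - c' j • α i) → ∀ j, j ≠ i → c' j = c j := by
  obtain ⟨e, he⟩ := hα.exists_basis hhyp hsimp hC
  obtain rfl : α = fun j => e.coord j := funext fun j => (he j).symm
  obtain rfl : C = e.openCone := hα.2.2.2.trans (by ext; simp [Module.Basis.openCone])
  obtain ⟨b', rfl⟩ := (hsimp C' hC'.1).exists_eq_openCone
  obtain ⟨m, hm⟩ := (hC'.isWallOf (hα.1 i)).exists_eq_ker_coord hhyp hC'.1
  obtain ⟨hside, hfacet⟩ := hC'.closedCone_subset_and_facet_subset hhyp hC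
  obtain ⟨c, e', he', hcone, hle, hlt⟩ := exists_basis_sub_smul_of_closedCone hm.symm hside hfacet
  have hbasis : IsChamberBasis A b'.openCone fun j => e.coord j - c j • e.coord i := by
    simpa [he', hcone] using (hcone ▸ hC'.1 : IsChamberOf A e'.openCone).isChamberBasis_coord hhyp
  refine ⟨c, hbasis, hle, hlt, fun c' hc' j hj => ?_⟩
  obtain ⟨k, hk⟩ := hc'.2.1 _ (hbasis.1 j)
  obtain ⟨rfl, hc⟩ := e.eq_of_ker_coord_sub_smul_eq hj hk
  exact hc
end

section
/- Let A be a simplicial ℓ-arrangement in ℝ^ℓ, K a chamber with basis B^K = {α_1,…,α_ℓ}, and K_i an adjacent chamber with induced basis B^{K_i} = σ^K_i(B^K). Then for all 1 ≤ j ≤ ℓ one has c^{K_i}_{ij} = c^K_{ij}, and consequently σ^K_i ∘ σ^{K_i}_i = σ^{K_i}_i ∘ σ^K_i = id. -/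
open scoped Classical

/-!
Write the basis of `C''` as `βⱼ = αⱼ + tⱼ αᵢ` with `tᵢ = 0`. A relative-interior point of the
wall `αᵢ^⊥` of `C` is one of `C''` as well, and pushing it slightly into `C` lands in both
chambers, so `C'' = C`. Evaluating `βⱼ ≥ 0` at a relative-interior point of the wall `αⱼ^⊥` of
`C` gives `tⱼ ≥ 0`; the same argument with the roles of `α` and `β` exchanged gives `tⱼ ≤ 0`.
-/

open Module Submodule LinearMap Filter Topology

theorem Submodule.eq_ker_of_le_of_finrank_add_one {K V : Type*} [Field K] [AddCommGroup V]
    [Module K V] [FiniteDimensional K V] {W : Submodule K V} {f : V →ₗ[K] K} (hf : f ≠ 0)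
    (hW : finrank K W + 1 = finrank K V) (hle : W ≤ ker f) : W = ker f := by
  refine eq_of_le_of_finrank_le hle ?_
  have : finrank K (ker f) < finrank K V := by
    rw [← finrank_top K V]
    exact finrank_lt_finrank_of_lt (lt_top_iff_ne_top.2 (ker_eq_top.not.2 hf))
  omega

section PositiveCone

variable {ι V : Type*} [AddCommGroup V] [Module ℝ V]

def IsWallPoint (α : ι → V →ₗ[ℝ] ℝ) (j : ι) (w : V) : Prop :=
  α j w = 0 ∧ ∀ k, k ≠ j → 0 < α k w

variable {α : ι → V →ₗ[ℝ] ℝ} {i j : ι} {w : V}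

theorem IsWallPoint.nonneg (hw : IsWallPoint α j w) (k : ι) : 0 ≤ α k w := by
  rcases eq_or_ne k j with rfl | hkj
  · exact hw.1.ge
  · exact (hw.2 k hkj).le

theorem IsWallPoint.shear (hw : IsWallPoint α i w) (s : ι → ℝ) :
    IsWallPoint (fun k => α k + s k • α i) i w :=
  ⟨by simp [hw.1], fun k hk => by simpa [hw.1] using hw.2 k hk⟩

theorem nonneg_of_pos_on_posCone {g : V →ₗ[ℝ] ℝ} {v₀ : V} (hv₀ : ∀ k, 0 < α k v₀)
    (hg : ∀ v, (∀ k, 0 < α k v) → 0 < g v) {v : V} (hv : ∀ k, 0 ≤ α k v) : 0 ≤ g v := by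
  have hgv₀ : 0 < g v₀ := hg v₀ hv₀
  by_contra! hneg
  -- for `ε = -g v / g v₀` the point `v + ε v₀` lies in the open cone, yet `g` vanishes there
  have hε : 0 < -g v / g v₀ := div_pos (neg_pos.2 hneg) hgv₀
  have h := hg (v + (-g v / g v₀) • v₀) fun k => by
    rw [map_add, map_smul, smul_eq_mul]
    nlinarith [hv k, hv₀ k]
  rw [map_add, map_smul, smul_eq_mul, div_mul_cancel₀ _ hgv₀.ne'] at h
  linarith

theorem IsWallPoint.coeff_nonneg (hw : IsWallPoint α j w) (hij : i ≠ j) {v₀ : V}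
    (hv₀ : ∀ k, 0 < α k v₀) {t : ℝ} (ht : ∀ v, (∀ k, 0 < α k v) → 0 < (α j + t • α i) v) :
    0 ≤ t := by
  have h := nonneg_of_pos_on_posCone hv₀ ht hw.nonneg
  simp only [LinearMap.add_apply, LinearMap.smul_apply, smul_eq_mul, hw.1, zero_add] at h
  exact nonneg_of_mul_nonneg_left h (hw.2 i hij)

theorem shear_coeff_eq_zero_of_cone_eq (hij : i ≠ j) {s : ι → ℝ} (hsi : s i = 0)
    (hcone : ∀ v, (∀ k, 0 < α k v) ↔ ∀ k, 0 < (α k + s k • α i) v) {v₀ : V}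
    (hv₀ : ∀ k, 0 < α k v₀) {u : V} (hw : IsWallPoint α j w)
    (hu : IsWallPoint (fun k => α k + s k • α i) j u) : s j = 0 := by
  have hnonneg : 0 ≤ s j := hw.coeff_nonneg hij hv₀ fun v hv => (hcone v).1 hv j
  have hunshear : (α j + s j • α i) + (-s j) • (α i + s i • α i) = α j := by
    rw [hsi]
    module
  have hnonpos : 0 ≤ -s j := hu.coeff_nonneg hij ((hcone v₀).1 hv₀) fun v hv => by
    rw [hunshear]
    exact (hcone v).2 hv j
  linarith

theorem IsWallPoint.eventually_pos [Finite ι] (hw : IsWallPoint α i w) {v : V}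
    (hv : 0 < α i v) : ∀ᶠ ε in 𝓝[>] (0 : ℝ), ∀ k, 0 < α k (w + ε • v) := by
  refine eventually_all.2 fun k => ?_
  simp only [map_add, map_smul, smul_eq_mul]
  rcases eq_or_ne k i with rfl | hki
  · filter_upwards [self_mem_nhdsWithin] with ε hε
    rw [hw.1, zero_add]
    exact mul_pos hε hv
  · have hlim : Tendsto (fun ε : ℝ => α k w + ε * α k v) (𝓝 0) (𝓝 (α k w)) :=
      (by fun_prop : Continuous fun ε : ℝ => α k w + ε * α k v).tendsto' 0 _ (by simp)
    exact nhdsWithin_le_nhds (hlim.eventually (eventually_gt_nhds (hw.2 k hki)))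

end PositiveCone

section Chamber

variable {V : Type*} [AddCommGroup V] [Module ℝ V] [TopologicalSpace V]
  {A : Finset (Submodule ℝ V)} {C C' : Set V}

theorem IsChamberOf.nonempty_s9 (hC : IsChamberOf A C) : C.Nonempty := by
  obtain ⟨x, hx, rfl⟩ := hC
  exact ⟨x, mem_connectedComponentIn hx⟩

theorem IsChamberOf.eq_of_mem_s9 {x : V} (hC : IsChamberOf A C) (hC' : IsChamberOf A C')
    (hx : x ∈ C) (hx' : x ∈ C') : C = C' := by
  obtain ⟨y, -, rfl⟩ := hC
  obtain ⟨y', -, rfl⟩ := hC'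
  rw [connectedComponentIn_eq hx, connectedComponentIn_eq hx']

variable {n : ℕ} {α : Fin n → V →ₗ[ℝ] ℝ}

theorem IsChamberBasis.mem_iff (hα : IsChamberBasis A C α) {v : V} :
    v ∈ C ↔ ∀ k, 0 < α k v := by
  rw [hα.2.2.2, Set.mem_iInter]
  rfl

variable [IsTopologicalAddGroup V] [ContinuousSMul ℝ V] [T2Space V] [FiniteDimensional ℝ V]

theorem IsChamberBasis.nonneg_of_mem_closure (hα : IsChamberBasis A C α) {v : V}
    (hv : v ∈ closure C) (k : Fin n) : 0 ≤ α k v :=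
  closure_minimal (fun _ hx => (hα.mem_iff.1 hx k).le)
    (isClosed_le continuous_const (α k).continuous_of_finiteDimensional) hv

theorem IsChamberBasis.exists_isWallPoint (hα : IsChamberBasis A C α) (hne : C.Nonempty)
    (j : Fin n) : ∃ w, IsWallPoint α j w := by
  obtain ⟨v₀, hv₀⟩ := hne
  have hα0 : ∀ k, α k ≠ 0 := fun k h => by simpa [h] using hα.mem_iff.1 hv₀ k
  set S : Set V := (ker (α j) : Set V) ∩ closure C
  have hspan : ∀ k, span ℝ S ≤ ker (α k) → span ℝ S = ker (α k) := fun k =>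
    eq_ker_of_le_of_finrank_add_one (hα0 k) (hα.1 j).2
  have hp : ∀ k : {k // k ≠ j}, ∃ p ∈ S, 0 < α k p := by
    rintro ⟨k, hkj⟩
    by_contra! h
    have hle : span ℝ S ≤ ker (α k) := span_le.2 fun p hp =>
      le_antisymm (h p hp) (hα.nonneg_of_mem_closure hp.2 k)
    exact hkj (hα.2.2.1 ((hspan k hle).symm.trans (hspan j (span_le.2 fun p hp => hp.1))))
  choose p hpS hpos using hp
  refine ⟨∑ k, p k, ?_, fun m hm => ?_⟩
  · rw [map_sum]
    exact Finset.sum_eq_zero fun k _ => mem_ker.1 (hpS k).1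
  · rw [map_sum]
    exact (hpos ⟨m, hm⟩).trans_le <| Finset.single_le_sum
      (fun k _ => hα.nonneg_of_mem_closure (hpS k).2 m) (Finset.mem_univ _)

variable {i : Fin n} {s : Fin n → ℝ}

theorem IsChamberBasis.eq_of_shear (hα : IsChamberBasis A C α) (hC : IsChamberOf A C)
    (hC' : IsChamberOf A C') (hsi : s i = 0)
    (hβ : IsChamberBasis A C' fun k => α k + s k • α i) : C = C' := by
  obtain ⟨w, hw⟩ := hα.exists_isWallPoint hC.nonempty_s9 i
  obtain ⟨v₀, hv₀⟩ := hC.nonempty_s9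
  have hv₀i : 0 < α i v₀ := hα.mem_iff.1 hv₀ i
  obtain ⟨ε, hεα, hεβ⟩ := ((hw.eventually_pos hv₀i).and
    ((hw.shear s).eventually_pos (by simpa [hsi] using hv₀i))).exists
  exact hC.eq_of_mem_s9 hC' (hα.mem_iff.2 hεα) (hβ.mem_iff.2 hεβ)

theorem IsChamberBasis.shear_coeff_eq_zero (hα : IsChamberBasis A C α)
    (hβ : IsChamberBasis A C fun k => α k + s k • α i) (hne : C.Nonempty) (hsi : s i = 0)
    (j : Fin n) : s j = 0 := by
  rcases eq_or_ne j i with rfl | hji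
  · exact hsi
  obtain ⟨v₀, hv₀⟩ := hne
  obtain ⟨w, hw⟩ := hα.exists_isWallPoint ⟨v₀, hv₀⟩ j
  obtain ⟨u, hu⟩ := hβ.exists_isWallPoint ⟨v₀, hv₀⟩ j
  exact shear_coeff_eq_zero_of_cone_eq hji.symm hsi (fun v => hα.mem_iff.symm.trans hβ.mem_iff)
    (hα.mem_iff.1 hv₀) hw hu

end Chamber

theorem adjacent_coeffs_involutive_general (ℓ : ℕ)
    (A : Finset (Submodule ℝ (Fin ℓ → ℝ)))
    (C : Set (Fin ℓ → ℝ)) (hC : IsChamberOf A C)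
    (α : Fin ℓ → ((Fin ℓ → ℝ) →ₗ[ℝ] ℝ)) (hα : IsChamberBasis A C α)
    (i : Fin ℓ) (C' : Set (Fin ℓ → ℝ))
    (c : Fin ℓ → ℝ) (hci : c i = 2)
    (C'' : Set (Fin ℓ → ℝ))
    (hC'' : IsAdjChamber A C' C'' (LinearMap.ker (α i - c i • α i)))
    (d : Fin ℓ → ℝ) (hdi : d i = 2)
    (hdB : IsChamberBasis A C''
      (fun j => (α j - c j • α i) - d j • (α i - c i • α i))) :
    (∀ j, d j = c j) ∧
      ∀ j, (α j - c j • α i) - d j • (α i - c i • α i) = α j := by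
  have hshear : ∀ j, (α j - c j • α i) - d j • (α i - c i • α i) = α j + (d - c) j • α i := by
    intro j
    rw [hci, Pi.sub_apply]
    module
  simp only [hshear] at hdB ⊢
  have hsi : (d - c) i = 0 := by simp [hdi, hci]
  obtain rfl : C = C'' := hα.eq_of_shear hC hC''.1 hsi hdB
  have hdc : ∀ j, d j = c j := fun j =>
    sub_eq_zero.1 (hα.shear_coeff_eq_zero hdB hC.nonempty_s9 hsi j)
  exact ⟨hdc, fun j => by simp [hdc j]⟩

/-- `c^{K_i}_{ij} = c^K_{ij}`, and consequently `σ^K_i ∘ σ^{K_i}_i = id`: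
crossing the wall `αᵢ^⊥` from the adjacent chamber back again gives the original basis. -/
theorem adjacent_coeffs_involutive (ℓ : ℕ)
    (A : Finset (Submodule ℝ (Fin ℓ → ℝ)))
    (hhyp : ∀ H ∈ A, IsLinHyperplane H) (hsimp : IsSimplicialArr A)
    (C : Set (Fin ℓ → ℝ)) (hC : IsChamberOf A C)
    (α : Fin ℓ → ((Fin ℓ → ℝ) →ₗ[ℝ] ℝ)) (hα : IsChamberBasis A C α)
    (i : Fin ℓ) (C' : Set (Fin ℓ → ℝ))
    (hC' : IsAdjChamber A C C' (LinearMap.ker (α i)))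
    (c : Fin ℓ → ℝ) (hci : c i = 2)
    (hcB : IsChamberBasis A C' (fun j => α j - c j • α i))
    (C'' : Set (Fin ℓ → ℝ))
    (hC'' : IsAdjChamber A C' C'' (LinearMap.ker (α i - c i • α i)))
    (d : Fin ℓ → ℝ) (hdi : d i = 2)
    (hdB : IsChamberBasis A C''
      (fun j => (α j - c j • α i) - d j • (α i - c i • α i))) :
    (∀ j, d j = c j) ∧
      ∀ j, (α j - c j • α i) - d j • (α i - c i • α i) = α j :=
  adjacent_coeffs_involutive_general ℓ A C hC α hα i C' c hci C'' hC'' d hdi hdB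
end

section
/- Let A be a simplicial ℓ-arrangement in ℝ^ℓ, K a chamber with basis B^K = {α_1,…,α_ℓ}, and K_i an adjacent chamber. If i ≠ j and c^K_{ij} = 0, then c^{K_i}_{jk} = c^K_{jk} for all k ∈ {1,…,ℓ}. -/
open scoped Classical

/-!
A hyperplane of `A` misses every chamber, so its linear form has constant sign there; as the basis
of a simplicial chamber is a basis of the dual space, the coordinates of a wall form in a chamber
basis are therefore all `≥ 0` or all `≤ 0`. Applied to the walls of `K_j` and of `(K_i)_j`, written
in the bases of `K`, `K_i`, `K_j` and `(K_i)_j`, this sign coherence forces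
`c^K_{ji} = c^{K_i}_{ji} = 0`, and then `c^K_{jk} - c^{K_i}_{jk}` to be both `≥ 0` and `≤ 0`.
-/

section SimplicialCone

variable {V : Type*} [AddCommGroup V] [Module ℝ V]

theorem IsOpenSimplicialCone.exists_basis_eq {C : Set V} (hC : IsOpenSimplicialCone C) :
    ∃ b : Module.Basis (Fin (Module.finrank ℝ V)) ℝ V, C = {v | ∀ i, 0 < b.repr v i} := by
  obtain ⟨b, rfl⟩ := hC
  refine ⟨b, Set.ext fun v => ⟨?_, fun hv => ⟨_, hv, (b.sum_repr v).symm⟩⟩⟩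
  rintro ⟨c, hc, rfl⟩ i
  rw [b.repr_sum_self]
  exact hc i

theorem IsOpenSimplicialCone.eq_zero_of_forall_add_smul_mem {C : Set V}
    (hC : IsOpenSimplicialCone C) {x u : V} (h : ∀ t : ℝ, x + t • u ∈ C) : u = 0 := by
  obtain ⟨b, rfl⟩ := hC.exists_basis_eq
  refine b.repr.injective (Finsupp.ext fun i => ?_)
  by_contra hu
  replace hu : b.repr u i ≠ 0 := by simpa using hu
  have := h (-b.repr x i / b.repr u i) i
  simp only [map_add, map_smul, Finsupp.add_apply, Finsupp.smul_apply, smul_eq_mul,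
    div_mul_cancel₀ _ hu] at this
  linarith

theorem IsOpenSimplicialCone.injective_pi {ι : Type*}
    {C : Set V} (hC : IsOpenSimplicialCone C) {s : ι → V →ₗ[ℝ] ℝ}
    (hs : C = ⋂ m, {v | 0 < s m v}) : Function.Injective (LinearMap.pi s) := by
  rw [← LinearMap.ker_eq_bot, Submodule.eq_bot_iff]
  intro u hu
  obtain ⟨b, hb⟩ := hC.exists_basis_eq
  have hx : ∑ i, b i ∈ C := by simp [hb]
  refine hC.eq_zero_of_forall_add_smul_mem (x := ∑ i, b i) fun t => ?_
  have hsu : ∀ m, s m u = 0 := fun m => congrFun (LinearMap.mem_ker.mp hu) m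
  rw [hs] at hx ⊢
  simpa [hsu] using hx

theorem IsOpenSimplicialCone.surjective_pi [FiniteDimensional ℝ V] {ι : Type*} [Fintype ι]
    {C : Set V} (hC : IsOpenSimplicialCone C) {s : ι → V →ₗ[ℝ] ℝ}
    (hs : C = ⋂ m, {v | 0 < s m v}) (hcard : Fintype.card ι = Module.finrank ℝ V) :
    Function.Surjective (LinearMap.pi s) :=
  (LinearMap.injective_iff_surjective_of_finrank_eq_finrank (by simp [hcard])).mp
    (hC.injective_pi hs)

end SimplicialCone

theorem nonneg_of_forall_pos_add_mul {a b : ℝ} (h : ∀ t : ℝ, 0 < t → 0 < a + t * b) : 0 ≤ a := by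
  by_contra! ha
  rcases le_or_gt b 0 with hb | hb
  · linarith [h 1 one_pos]
  · have := h (-a / b) (div_pos (neg_pos.mpr ha) hb)
    rw [div_mul_cancel₀ _ hb.ne'] at this
    linarith

section Chamber

variable {V : Type*} [AddCommGroup V] [Module ℝ V] [TopologicalSpace V]
  {A : Finset (Submodule ℝ V)} {D : Set V}

theorem IsChamberOf.nonempty_s10 (hD : IsChamberOf A D) : D.Nonempty := by
  obtain ⟨x, hx, rfl⟩ := hD
  exact ⟨x, mem_connectedComponentIn hx⟩

theorem IsChamberOf.pos_or_neg_of_ker_mem [IsTopologicalAddGroup V] [ContinuousSMul ℝ V]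
    [T2Space V] [FiniteDimensional ℝ V] (hD : IsChamberOf A D) {f : V →ₗ[ℝ] ℝ}
    (hf : LinearMap.ker f ∈ A) : (∀ y ∈ D, 0 < f y) ∨ (∀ y ∈ D, f y < 0) := by
  have hpre : IsPreconnected D := by
    obtain ⟨x, -, rfl⟩ := hD
    exact isPreconnected_connectedComponentIn
  have hne : ∀ y ∈ D, f y ≠ 0 := by
    obtain ⟨x, -, rfl⟩ := hD
    exact fun y hy hy0 =>
      connectedComponentIn_subset _ _ hy (Set.mem_iUnion₂.mpr ⟨_, hf, LinearMap.mem_ker.mpr hy0⟩)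
  have hcont := f.continuous_of_finiteDimensional.continuousOn (s := D)
  obtain ⟨x, hx⟩ := hD.nonempty_s10
  rcases (hne x hx).lt_or_gt with hneg | hpos
  · refine Or.inr fun y hy => ?_
    by_contra! hy0
    obtain ⟨z, hz, hz0⟩ := hpre.intermediate_value hx hy hcont ⟨hneg.le, hy0⟩
    exact hne z hz hz0
  · refine Or.inl fun y hy => ?_
    by_contra! hy0
    obtain ⟨z, hz, hz0⟩ := hpre.intermediate_value hy hx hcont ⟨hy0, hpos.le⟩
    exact hne z hz hz0

theorem IsChamberOf.mul_nonneg_of_ker_mem [IsTopologicalAddGroup V] [ContinuousSMul ℝ V]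
    [T2Space V] [FiniteDimensional ℝ V] {ι : Type*} (hD : IsChamberOf A D)
    {s : ι → V →ₗ[ℝ] ℝ} (hs : D = ⋂ m, {v | 0 < s m v}) {f : V →ₗ[ℝ] ℝ}
    (hf : LinearMap.ker f ∈ A) {x y : V} (hx : ∀ m, 0 ≤ s m x) (hy : ∀ m, 0 ≤ s m y) :
    0 ≤ f x * f y := by
  obtain ⟨u, hu⟩ := hD.nonempty_s10
  have hmem : ∀ z, (∀ m, 0 ≤ s m z) → ∀ t : ℝ, 0 < t → z + t • u ∈ D := by
    intro z hz t ht
    rw [hs] at hu ⊢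
    simp only [Set.mem_iInter, Set.mem_ofPred_eq] at hu ⊢
    intro m
    simpa using add_pos_of_nonneg_of_pos (hz m) (mul_pos ht (hu m))
  rcases hD.pos_or_neg_of_ker_mem hf with hpos | hneg
  · have key : ∀ z, (∀ m, 0 ≤ s m z) → 0 ≤ f z := fun z hz =>
      nonneg_of_forall_pos_add_mul fun t ht => by simpa using hpos _ (hmem z hz t ht)
    exact mul_nonneg (key x hx) (key y hy)
  · have key : ∀ z, (∀ m, 0 ≤ s m z) → 0 ≤ -f z := fun z hz =>
      nonneg_of_forall_pos_add_mul (b := -f u) fun t ht => by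
        linarith [show f (z + t • u) = f z + t * f u by simp, hneg _ (hmem z hz t ht)]
    nlinarith [key x hx, key y hy]

end Chamber

section Coefficients

variable {V : Type*} [AddCommGroup V] [Module ℝ V] [TopologicalSpace V] [IsTopologicalAddGroup V]
  [ContinuousSMul ℝ V] [T2Space V] [FiniteDimensional ℝ V] {A : Finset (Submodule ℝ V)}
  {D : Set V} {ι : Type*} [Fintype ι] {s : ι → V →ₗ[ℝ] ℝ}

theorem IsSimplicialArr.mul_nonneg_of_ker_sum_mem (hsimp : IsSimplicialArr A)
    (hcard : Fintype.card ι = Module.finrank ℝ V) (hD : IsChamberOf A D)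
    (hs : D = ⋂ m, {v | 0 < s m v}) {c : ι → ℝ}
    (hf : LinearMap.ker (∑ m, c m • s m) ∈ A) (p q : ι) : 0 ≤ c p * c q := by
  have hdual : ∀ r, ∃ z, ∀ m, s m z = (Pi.single r 1 : ι → ℝ) m := fun r =>
    let ⟨z, hz⟩ := (hsimp D hD).surjective_pi hs hcard (Pi.single r 1)
    ⟨z, congrFun hz⟩
  obtain ⟨x, hx⟩ := hdual p
  obtain ⟨y, hy⟩ := hdual q
  have hval : ∀ r z, (∀ m, s m z = (Pi.single r 1 : ι → ℝ) m) → (∑ m, c m • s m) z = c r := by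
    intro r z hz
    simp [hz, Pi.single_apply]
  have hnonneg : ∀ r z, (∀ m, s m z = (Pi.single r 1 : ι → ℝ) m) → ∀ m, 0 ≤ s m z := by
    intro r z hz m
    rw [hz m, Pi.single_apply]
    split_ifs <;> norm_num
  simpa [hval p x hx, hval q y hy] using
    hD.mul_nonneg_of_ker_mem hs hf (hnonneg p x hx) (hnonneg q y hy)

theorem IsSimplicialArr.nonneg_of_ker_add_smul_mem (hsimp : IsSimplicialArr A)
    (hcard : Fintype.card ι = Module.finrank ℝ V) (hD : IsChamberOf A D)
    (hs : D = ⋂ m, {v | 0 < s m v}) {p q : ι} (hpq : p ≠ q) {b : ℝ}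
    (hf : LinearMap.ker (s p + b • s q) ∈ A) : 0 ≤ b := by
  have := hsimp.mul_nonneg_of_ker_sum_mem hcard hD hs (c := Pi.single p 1 + Pi.single q b)
    (by simpa [Pi.single_apply, add_smul, ite_smul, Finset.sum_add_distrib] using hf) p q
  simpa [hpq] using this

theorem IsSimplicialArr.nonneg_of_ker_add_smul_add_smul_mem (hsimp : IsSimplicialArr A)
    (hcard : Fintype.card ι = Module.finrank ℝ V) (hD : IsChamberOf A D)
    (hs : D = ⋂ m, {v | 0 < s m v}) {p q r : ι} (hpq : p ≠ q) (hpr : p ≠ r)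
    (hqr : q ≠ r) {a b : ℝ} (hf : LinearMap.ker (s p + a • s r + b • s q) ∈ A) : 0 ≤ b := by
  have := hsimp.mul_nonneg_of_ker_sum_mem hcard hD hs
    (c := Pi.single p 1 + Pi.single r a + Pi.single q b)
    (by simpa [Pi.single_apply, add_smul, ite_smul, Finset.sum_add_distrib] using hf) p q
  simpa [hpq, hpr, hqr] using this

theorem IsSimplicialArr.coeff_eq_zero_symm (hsimp : IsSimplicialArr A)
    (hcard : Fintype.card ι = Module.finrank ℝ V) {C Ci : Set V} {α : ι → V →ₗ[ℝ] ℝ}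
    (hC : IsChamberOf A C) (hα : C = ⋂ m, {v | 0 < α m v}) {i j : ι} (hij : i ≠ j)
    {ci : ι → ℝ} (hCi : IsChamberOf A Ci) (hη : Ci = ⋂ m, {v | 0 < (α m - ci m • α i) v})
    (hcii : ci i = 2) (hzero : ci j = 0) {c : ℝ} (hwall : LinearMap.ker (α i - c • α j) ∈ A) :
    c = 0 := by
  have hle : 0 ≤ -c := hsimp.nonneg_of_ker_add_smul_mem hcard hC hα hij <| by
    rwa [show α i + -c • α j = α i - c • α j by module]
  have hη_eq : -((α i - ci i • α i) + c • (α j - ci j • α i)) = α i - c • α j := by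
    rw [hcii, hzero]
    module
  have hge : 0 ≤ c := hsimp.nonneg_of_ker_add_smul_mem hcard hCi hη hij <| by
    rwa [← LinearMap.ker_neg, hη_eq]
  linarith

end Coefficients

theorem adjacent_coeffs_of_orthogonal_general (ℓ : ℕ)
    (A : Finset (Submodule ℝ (Fin ℓ → ℝ)))
    (hsimp : IsSimplicialArr A)
    (C : Set (Fin ℓ → ℝ)) (hC : IsChamberOf A C)
    (α : Fin ℓ → ((Fin ℓ → ℝ) →ₗ[ℝ] ℝ)) (hα : IsChamberBasis A C α)
    (i j : Fin ℓ) (hij : i ≠ j)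
    -- the coefficients `c^K_{i·}` across the wall `αᵢ^⊥`
    (Ci : Set (Fin ℓ → ℝ)) (hCi : IsAdjChamber A C Ci (LinearMap.ker (α i)))
    (ci : Fin ℓ → ℝ) (hcii : ci i = 2)
    (hciB : IsChamberBasis A Ci (fun k => α k - ci k • α i))
    -- the coefficients `c^K_{j·}` across the wall `αⱼ^⊥`
    (Cj : Set (Fin ℓ → ℝ)) (hCj : IsAdjChamber A C Cj (LinearMap.ker (α j)))
    (cj : Fin ℓ → ℝ) (hcjj : cj j = 2)
    (hcjB : IsChamberBasis A Cj (fun k => α k - cj k • α j))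
    -- the coefficients `c^{K_i}_{j·}` of the adjacent chamber `K_i = Ci`
    (C' : Set (Fin ℓ → ℝ))
    (hC' : IsAdjChamber A Ci C' (LinearMap.ker (α j - ci j • α i)))
    (d : Fin ℓ → ℝ) (hdj : d j = 2)
    (hdB : IsChamberBasis A C'
      (fun k => (α k - ci k • α i) - d k • (α j - ci j • α i)))
    (hzero : ci j = 0) :
    ∀ k, d k = cj k := by
  have hcard : Fintype.card (Fin ℓ) = Module.finrank ℝ (Fin ℓ → ℝ) := by simp
  have hcji : cj i = 0 := hsimp.coeff_eq_zero_symm hcard hC hα.2.2.2 hij hCi.1 hciB.2.2.2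
    hcii hzero (hcjB.1 i).1
  -- `σᵢ` is an involution: `α` is the basis that `K_i` induces on its neighbour `K` across `αᵢ^⊥`.
  have hσσ : ∀ m, (α m - ci m • α i) - ci m • (α i - ci i • α i) = α m := fun m => by
    rw [hcii]
    module
  have hdi : d i = 0 := hsimp.coeff_eq_zero_symm hcard hCi.1 hciB.2.2.2 hij hC
    (by simpa only [hσσ] using hα.2.2.2) hcii hzero (hdB.1 i).1
  intro k
  rcases eq_or_ne k i with rfl | hki
  · rw [hdi, hcji]
  rcases eq_or_ne k j with rfl | hkj
  · rw [hdj, hcjj]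
  -- with `β` the basis of `C'`: `αₖ - cjₖ αⱼ = βₖ - ciₖ βᵢ + (cjₖ - dₖ) βⱼ`
  have hle : 0 ≤ cj k - d k := hsimp.nonneg_of_ker_add_smul_add_smul_mem hcard hC'.1 hdB.2.2.2
    hkj hki hij.symm (a := -ci k) <| by
      convert (hcjB.1 k).1 using 2
      rw [hcii, hzero, hdi, hdj]
      module
  -- with `γ` the basis of `Cj`: `βₖ = γₖ - ciₖ γᵢ + (dₖ - cjₖ) γⱼ`
  have hge : 0 ≤ d k - cj k := hsimp.nonneg_of_ker_add_smul_add_smul_mem hcard hCj.1 hcjB.2.2.2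
    hkj hki hij.symm (a := -ci k) <| by
      convert (hdB.1 k).1 using 2
      rw [hcjj, hcji, hzero]
      module
  linarith

/-- If `c^K_{ij} = 0` (`i ≠ j`) then `c^{K_i}_{jk} = c^K_{jk}` for all `k`. -/
theorem adjacent_coeffs_of_orthogonal (ℓ : ℕ)
    (A : Finset (Submodule ℝ (Fin ℓ → ℝ)))
    (hhyp : ∀ H ∈ A, IsLinHyperplane H) (hsimp : IsSimplicialArr A)
    (C : Set (Fin ℓ → ℝ)) (hC : IsChamberOf A C)
    (α : Fin ℓ → ((Fin ℓ → ℝ) →ₗ[ℝ] ℝ)) (hα : IsChamberBasis A C α)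
    (i j : Fin ℓ) (hij : i ≠ j)
    -- the coefficients `c^K_{i·}` across the wall `αᵢ^⊥`
    (Ci : Set (Fin ℓ → ℝ)) (hCi : IsAdjChamber A C Ci (LinearMap.ker (α i)))
    (ci : Fin ℓ → ℝ) (hcii : ci i = 2)
    (hciB : IsChamberBasis A Ci (fun k => α k - ci k • α i))
    -- the coefficients `c^K_{j·}` across the wall `αⱼ^⊥`
    (Cj : Set (Fin ℓ → ℝ)) (hCj : IsAdjChamber A C Cj (LinearMap.ker (α j)))
    (cj : Fin ℓ → ℝ) (hcjj : cj j = 2)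
    (hcjB : IsChamberBasis A Cj (fun k => α k - cj k • α j))
    -- the coefficients `c^{K_i}_{j·}` of the adjacent chamber `K_i = Ci`
    (C' : Set (Fin ℓ → ℝ))
    (hC' : IsAdjChamber A Ci C' (LinearMap.ker (α j - ci j • α i)))
    (d : Fin ℓ → ℝ) (hdj : d j = 2)
    (hdB : IsChamberBasis A C'
      (fun k => (α k - ci k • α i) - d k • (α j - ci j • α i)))
    (hzero : ci j = 0) :
    ∀ k, d k = cj k :=
  adjacent_coeffs_of_orthogonal_general ℓ A hsimp C hC α hα i j hij Ci hCi ci hcii hciB Cj hCj cj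
    hcjj hcjB C' hC' d hdj hdB hzero
end

section
/- Let A be an irreducible supersolvable simplicial 3-arrangement in ℝ^3 and X ∈ L_2(A) a modular element. Then |A_X| ≥ 3. -/
open scoped Classical

/-!
Suppose `A_X = {H₁, H₂}`, so that `X = H₁ ∩ H₂` is a line. For two hyperplanes `G ≠ G'` of `A`
with `X ⊄ G`, the line `Y = G ∩ G'` differs from `X`, and modularity makes `X + Y` a plane of
`L(A)`, i.e. a hyperplane of `A_X`: every such line lies in `H₁` or `H₂`.

If two hyperplanes `g₀ ≠ g₁` miss `X`, say with `q = g₀ ∩ g₁ ⊆ H₁`, then every further `g` missing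
`X` contains `q`: the lines `g ∩ g₀`, `g ∩ g₁` cannot lie in `H₁` (they would equal
`g₀ ∩ H₁ = q`, resp. `g₁ ∩ H₁ = q`), so both lie in `H₂`, hence both equal `g ∩ H₂` and thus `q`.
Then every hyperplane contains `H₂` or `q`, and `A` is the product along `V = H₂ ⊕ q`. If at most
one hyperplane `g` misses `X`, every hyperplane contains `X` or equals `g`, and `A` is the product
along `V = g ⊕ X` (or along `X` and any complement). Either way `A` is reducible.
-/

section Arrangement

open Module

variable {K V : Type*} [Field K] [AddCommGroup V] [Module K V]

section FiniteDimensional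

variable [FiniteDimensional K V]

theorem IsLinHyperplane.finrank_add_one {H : Submodule K V} (hH : IsLinHyperplane H) :
    finrank K H + 1 = finrank K V := by
  obtain ⟨f, hf, rfl⟩ := hH
  exact Module.Dual.finrank_ker_add_one_of_ne_zero hf

theorem finrank_sup_eq_two_of_ne {X Y : Submodule K V} (hX : finrank K X = 1)
    (hY : finrank K Y = 1) (hne : X ≠ Y) : finrank K ↥(X ⊔ Y) = 2 := by
  have hXY : X ⊓ Y = ⊥ := disjoint_iff.mp <|
    (Submodule.isAtom_iff_finrank_eq_one.mpr hX).disjoint_of_ne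
      (Submodule.isAtom_iff_finrank_eq_one.mpr hY) hne
  have := Submodule.finrank_sup_add_finrank_inf_eq X Y
  rw [hXY, finrank_bot] at this
  omega

theorem isCompl_of_finrank_eq_one {W q : Submodule K V} (hq : finrank K q = 1)
    (hW : finrank K W + 1 = finrank K V) (hqW : ¬ q ≤ W) : IsCompl W q :=
  (Submodule.isCompl_iff_disjoint W q (by omega)).mpr
    ((Submodule.isAtom_iff_finrank_eq_one.mpr hq).not_le_iff_disjoint.mp hqW).symm

theorem finrank_inf_eq_one_of_ne (hV : finrank K V = 3) {H H' : Submodule K V}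
    (hH : finrank K H = 2) (hH' : finrank K H' = 2) (hne : H ≠ H') :
    finrank K ↥(H ⊓ H') = 1 := by
  have hlt : H < H ⊔ H' := by
    refine lt_of_le_of_ne le_sup_left fun h => hne ?_
    exact (Submodule.eq_of_le_of_finrank_eq (h ▸ le_sup_right) (by rw [hH, hH'])).symm
  have h₁ := Submodule.finrank_lt_finrank_of_lt hlt
  have h₂ := Submodule.finrank_le (H ⊔ H')
  have := Submodule.finrank_sup_add_finrank_inf_eq H H'
  omega

theorem eq_inf_of_le_inf (hV : finrank K V = 3) {H H' u : Submodule K V}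
    (hH : finrank K H = 2) (hH' : finrank K H' = 2) (hne : H ≠ H') (hu : finrank K u = 1)
    (h : u ≤ H ⊓ H') : u = H ⊓ H' :=
  Submodule.eq_of_le_of_finrank_eq h (by rw [hu, finrank_inf_eq_one_of_ne hV hH hH' hne])

end FiniteDimensional

variable {A : Finset (Submodule K V)}

theorem mem_locArr_iff {X H : Submodule K V} : H ∈ locArr A X ↔ H ∈ A ∧ X ≤ H :=
  Finset.mem_filter

theorem inf_mem_interLat {G G' : Submodule K V} (hG : G ∈ A) (hG' : G' ∈ A) :
    G ⊓ G' ∈ interLat A :=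
  Finset.mem_image.mpr
    ⟨{G, G'}, Finset.mem_powerset.mpr (Finset.insert_subset hG (by simpa using hG')), by simp⟩

theorem mem_of_mem_interLat [FiniteDimensional K V] (hhyp : ∀ H ∈ A, IsLinHyperplane H)
    {Z : Submodule K V} (hZ : Z ∈ interLat A) (hZV : finrank K Z + 1 = finrank K V) : Z ∈ A := by
  obtain ⟨S, hSA, rfl⟩ := Finset.mem_image.mp hZ
  rcases S.eq_empty_or_nonempty with rfl | ⟨H, hH⟩
  · rw [Finset.inf_empty, finrank_top] at hZV
    omega
  · have hHA : H ∈ A := Finset.mem_powerset.mp hSA hH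
    have hHV := (hhyp H hHA).finrank_add_one
    have hle : S.inf id ≤ H := Finset.inf_le hH
    rwa [Submodule.eq_of_le_of_finrank_eq hle (by omega)]

theorem inf_locArr_eq {X : Submodule K V} (hX : X ∈ interLat A) : (locArr A X).inf id = X := by
  obtain ⟨S, hSA, rfl⟩ := Finset.mem_image.mp hX
  refine le_antisymm (Finset.inf_mono fun H hH => ?_) (Finset.le_inf fun H hH => ?_)
  · exact mem_locArr_iff.mpr ⟨Finset.mem_powerset.mp hSA hH, Finset.inf_le hH⟩
  · exact (mem_locArr_iff.mp hH).2

theorem two_le_card_locArr [FiniteDimensional K V] (hhyp : ∀ H ∈ A, IsLinHyperplane H)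
    {X : Submodule K V} (hX : X ∈ interLat A) (hXV : finrank K X + 2 ≤ finrank K V) :
    2 ≤ (locArr A X).card := by
  by_contra! hcard
  have hXinf := inf_locArr_eq hX
  rcases (locArr A X).eq_empty_or_nonempty with hempty | ⟨H, hH⟩
  · rw [hempty, Finset.inf_empty] at hXinf
    rw [← hXinf, finrank_top] at hXV
    omega
  · have hHX : H ≤ X := hXinf ▸ Finset.le_inf fun H' hH' =>
      (Finset.card_le_one.mp (by omega) H hH H' hH').le
    have hHV := (hhyp H (mem_locArr_iff.mp hH).1).finrank_add_one
    have := Submodule.finrank_mono hHX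
    omega

theorem IsModularFlat.exists_mem_locArr_inf_le [FiniteDimensional K V] (hV : finrank K V = 3)
    (hhyp : ∀ H ∈ A, IsLinHyperplane H) {X : Submodule K V} (hX : IsModularFlat A X)
    (hX1 : finrank K X = 1) {G G' : Submodule K V} (hG : G ∈ A) (hG' : G' ∈ A) (hne : G ≠ G')
    (hXG : ¬ X ≤ G) : ∃ H ∈ locArr A X, G ⊓ G' ≤ H := by
  have hY1 : finrank K ↥(G ⊓ G') = 1 := by
    have := (hhyp G hG).finrank_add_one
    have := (hhyp G' hG').finrank_add_one
    exact finrank_inf_eq_one_of_ne hV (by omega) (by omega) hne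
  have hXY : X ≠ G ⊓ G' := fun h => hXG (h ▸ inf_le_left)
  have hsup : X ⊔ G ⊓ G' ∈ A :=
    mem_of_mem_interLat hhyp (hX.2 _ (inf_mem_interLat hG hG'))
      (by rw [finrank_sup_eq_two_of_ne hX1 hY1 hXY, hV])
  exact ⟨_, mem_locArr_iff.mpr ⟨hsup, le_sup_left⟩, le_sup_right⟩

theorem inf_le_of_locArr_eq_pair [FiniteDimensional K V] (hV : finrank K V = 3)
    (hA : ∀ H ∈ A, finrank K H = 2) {X H₁ H₂ : Submodule K V} (hloc : locArr A X = {H₁, H₂})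
    (hpts : ∀ G ∈ A, ∀ G' ∈ A, G ≠ G' → ¬ X ≤ G → ∃ H ∈ locArr A X, G ⊓ G' ≤ H)
    {g₀ g₁ : Submodule K V} (hg₀ : g₀ ∈ A) (hg₁ : g₁ ∈ A) (hXg₀ : ¬ X ≤ g₀) (hXg₁ : ¬ X ≤ g₁)
    (hne : g₀ ≠ g₁) (hq : g₀ ⊓ g₁ ≤ H₁) {g : Submodule K V} (hg : g ∈ A) (hXg : ¬ X ≤ g) :
    g₀ ⊓ g₁ ≤ g := by
  by_contra hqg
  have hq1 := finrank_inf_eq_one_of_ne hV (hA _ hg₀) (hA _ hg₁) hne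
  have hH₁ := mem_locArr_iff.mp (hloc ▸ Finset.mem_insert_self H₁ {H₂})
  have hH₂ := mem_locArr_iff.mp (hloc ▸ Finset.mem_insert_of_mem (Finset.mem_singleton_self H₂))
  have inf_eq : ∀ g' ∈ A, g' ≠ g → ¬ X ≤ g' → g₀ ⊓ g₁ ≤ g' → g ⊓ g' = g ⊓ H₂ := by
    intro g' hg' hg'g hXg' hqg'
    have hgg' := finrank_inf_eq_one_of_ne hV (hA _ hg) (hA _ hg') hg'g.symm
    obtain ⟨H, hH, hle⟩ := hpts g hg g' hg' hg'g.symm hXg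
    rcases Finset.mem_insert.mp (hloc ▸ hH) with rfl | hH
    · have hg'H : g' ≠ H := fun h => hXg' (h ▸ hH₁.2)
      have e₁ := eq_inf_of_le_inf hV (hA _ hg') (hA _ hH₁.1) hg'H hgg' (le_inf inf_le_right hle)
      have e₂ := eq_inf_of_le_inf hV (hA _ hg') (hA _ hH₁.1) hg'H hq1 (le_inf hqg' hq)
      exact absurd (e₂.trans e₁.symm ▸ inf_le_left) hqg
    · rw [Finset.mem_singleton.mp hH] at hle
      exact eq_inf_of_le_inf hV (hA _ hg) (hA _ hH₂.1) (fun h => hXg (h ▸ hH₂.2)) hgg'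
        (le_inf inf_le_left hle)
  have hg₀g : g₀ ≠ g := fun h => hqg (h ▸ inf_le_left)
  have hg₁g : g₁ ≠ g := fun h => hqg (h ▸ inf_le_right)
  have h₀₁ : g ⊓ g₀ = g ⊓ g₁ :=
    (inf_eq g₀ hg₀ hg₀g hXg₀ inf_le_left).trans (inf_eq g₁ hg₁ hg₁g hXg₁ inf_le_right).symm
  have hle : g ⊓ g₀ ≤ g₀ ⊓ g₁ := le_inf inf_le_right (h₀₁ ▸ inf_le_right)
  have hgg₀ := finrank_inf_eq_one_of_ne hV (hA _ hg) (hA _ hg₀) hg₀g.symm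
  exact hqg (Submodule.eq_of_le_of_finrank_eq hle (by rw [hgg₀, hq1]) ▸ inf_le_left)

theorem isReducibleArr_of_inf_le_of_locArr_eq_pair [FiniteDimensional K V] (hV : finrank K V = 3)
    (hA : ∀ H ∈ A, finrank K H = 2) {X H₁ H₂ : Submodule K V} (hloc : locArr A X = {H₁, H₂})
    (hpts : ∀ G ∈ A, ∀ G' ∈ A, G ≠ G' → ¬ X ≤ G → ∃ H ∈ locArr A X, G ⊓ G' ≤ H)
    (hX1 : finrank K X = 1) (hne : H₁ ≠ H₂)
    {g₀ g₁ : Submodule K V} (hg₀ : g₀ ∈ A) (hg₁ : g₁ ∈ A) (hXg₀ : ¬ X ≤ g₀) (hXg₁ : ¬ X ≤ g₁)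
    (hne₀₁ : g₀ ≠ g₁) (hq : g₀ ⊓ g₁ ≤ H₁) : IsReducibleArr A := by
  have hH₁ := mem_locArr_iff.mp (hloc ▸ Finset.mem_insert_self H₁ {H₂})
  have hH₂ := mem_locArr_iff.mp (hloc ▸ Finset.mem_insert_of_mem (Finset.mem_singleton_self H₂))
  have hq1 := finrank_inf_eq_one_of_ne hV (hA _ hg₀) (hA _ hg₁) hne₀₁
  have hqH₂ : ¬ g₀ ⊓ g₁ ≤ H₂ := fun h => by
    have hX := eq_inf_of_le_inf hV (hA _ hH₁.1) (hA _ hH₂.1) hne hX1 (le_inf hH₁.2 hH₂.2)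
    have hqX := eq_inf_of_le_inf hV (hA _ hH₁.1) (hA _ hH₂.1) hne hq1 (le_inf hq h)
    exact hXg₀ ((hX.trans hqX.symm) ▸ inf_le_left)
  refine ⟨H₂, g₀ ⊓ g₁, by rw [Ne, ← Submodule.finrank_eq_zero, hA _ hH₂.1]; simp,
    by rw [Ne, ← Submodule.finrank_eq_zero, hq1]; simp,
    isCompl_of_finrank_eq_one hq1 (by rw [hA _ hH₂.1, hV]) hqH₂, fun H hH => ?_⟩
  by_cases hXH : X ≤ H
  · have hHX : H ∈ locArr A X := mem_locArr_iff.mpr ⟨hH, hXH⟩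
    rcases Finset.mem_insert.mp (hloc ▸ hHX) with rfl | hH
    · exact Or.inr hq
    · exact Or.inl (Finset.mem_singleton.mp hH).ge
  · exact Or.inr (inf_le_of_locArr_eq_pair hV hA hloc hpts hg₀ hg₁ hXg₀ hXg₁
      hne₀₁ hq hH hXH)

theorem isReducibleArr_of_locArr_eq_pair [FiniteDimensional K V] (hV : finrank K V = 3)
    (hhyp : ∀ H ∈ A, IsLinHyperplane H) {X H₁ H₂ : Submodule K V} (hX : IsModularFlat A X)
    (hX1 : finrank K X = 1) (hne : H₁ ≠ H₂) (hloc : locArr A X = {H₁, H₂}) :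
    IsReducibleArr A := by
  have hA : ∀ H ∈ A, finrank K H = 2 := fun H hH => by
    have := (hhyp H hH).finrank_add_one
    omega
  have hpts : ∀ G ∈ A, ∀ G' ∈ A, G ≠ G' → ¬ X ≤ G → ∃ H ∈ locArr A X, G ⊓ G' ≤ H :=
    fun G hG G' hG' => hX.exists_mem_locArr_inf_le hV hhyp hX1 hG hG'
  by_cases hmiss : ∃ g₀ ∈ A, ∃ g₁ ∈ A, g₀ ≠ g₁ ∧ ¬ X ≤ g₀ ∧ ¬ X ≤ g₁
  · obtain ⟨g₀, hg₀, g₁, hg₁, hne₀₁, hXg₀, hXg₁⟩ := hmiss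
    obtain ⟨H, hH, hq⟩ := hpts g₀ hg₀ g₁ hg₁ hne₀₁ hXg₀
    rcases Finset.mem_insert.mp (hloc ▸ hH) with rfl | hH
    · exact isReducibleArr_of_inf_le_of_locArr_eq_pair hV hA hloc hpts hX1 hne hg₀ hg₁ hXg₀ hXg₁
        hne₀₁ hq
    · rw [Finset.mem_singleton.mp hH] at hq
      exact isReducibleArr_of_inf_le_of_locArr_eq_pair hV hA (hloc.trans (Finset.pair_comm _ _))
        hpts hX1 hne.symm hg₀ hg₁ hXg₀ hXg₁ hne₀₁ hq
  · obtain ⟨W, hWX, hW⟩ : ∃ W, IsCompl W X ∧ ∀ H ∈ A, W ≤ H ∨ X ≤ H := by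
      by_cases hg : ∃ g ∈ A, ¬ X ≤ g
      · obtain ⟨g, hg, hXg⟩ := hg
        refine ⟨g, isCompl_of_finrank_eq_one hX1 (by rw [hA g hg, hV]) hXg, fun H hH => ?_⟩
        by_cases hXH : X ≤ H
        · exact Or.inr hXH
        · by_contra hgH
          exact hmiss ⟨g, hg, H, hH, fun h => hgH (Or.inl h.le), hXg, hXH⟩
      · push Not at hg
        obtain ⟨W, hW⟩ := X.exists_isCompl
        exact ⟨W, hW.symm, fun H hH => Or.inr (hg H hH)⟩
    refine ⟨W, X, fun h => ?_, by rw [Ne, ← Submodule.finrank_eq_zero, hX1]; simp, hWX, hW⟩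
    rw [h] at hWX
    rw [eq_top_of_bot_isCompl hWX, finrank_top] at hX1
    omega

end Arrangement

theorem modular_localization_ge_three_general (A : Finset (Submodule ℝ (Fin 3 → ℝ)))
    (hhyp : ∀ H ∈ A, IsLinHyperplane H)
    (hirr : ¬ IsReducibleArr A)
    (X : Submodule ℝ (Fin 3 → ℝ))
    (hX2 : Module.finrank ℝ ((Fin 3 → ℝ) ⧸ X) = 2)
    (hXmod : IsModularFlat A X) :
    3 ≤ (locArr A X).card := by
  have hV : Module.finrank ℝ (Fin 3 → ℝ) = 3 := Module.finrank_fin_fun ℝ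
  have hX1 : Module.finrank ℝ X = 1 := by
    have := X.finrank_quotient_add_finrank
    omega
  by_contra! hcard
  have := two_le_card_locArr hhyp hXmod.1 (by omega)
  obtain ⟨H₁, H₂, hne, hloc⟩ := (Finset.card_eq_two (s := locArr A X)).mp (by omega)
  exact hirr (isReducibleArr_of_locArr_eq_pair hV hhyp hXmod hX1 hne hloc)

/-- In an irreducible supersolvable simplicial 3-arrangement, every rank-2 modular
element `X` satisfies `|A_X| ≥ 3`. -/
theorem modular_localization_ge_three (A : Finset (Submodule ℝ (Fin 3 → ℝ)))
    (hhyp : ∀ H ∈ A, IsLinHyperplane H)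
    (hirr : ¬ IsReducibleArr A)
    (hss : IsSupersolvableArr A) (hsimp : IsSimplicialArr A)
    (X : Submodule ℝ (Fin 3 → ℝ))
    (hX2 : Module.finrank ℝ ((Fin 3 → ℝ) ⧸ X) = 2)
    (hXmod : IsModularFlat A X) :
    3 ≤ (locArr A X).card :=
  modular_localization_ge_three_general A hhyp hirr X hX2 hXmod
end
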